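/- arXiv:2206.06071 — 8 statements merged into one kernel-verified Lean document; each statement's English description precedes it below -/
import Mathlib

section
/- Let (λₙ) be a sequence in L⁰(F, ℝᵈ) (equivalence classes of ℝᵈ-valued random variables) that is a.s. bounded, i.e. sup_n |λₙ| < ∞ almost surely. Then there exists a sequence (μₙ) with each μₙ a finite convex combination of λₙ, λₙ₊₁, … (with real nonnegative coefficients summing to 1), such that (μₙ) converges almost surely to some μ ∈ L⁰(F, ℝᵈ). -/
/-!
Dividing by `1 + supₙ ‖λₙ‖` reduces the theorem to uniformly bounded sequences, which are
bounded in the Hilbert space `L²(ℝᵈ)`. There the closed convex hulls `Kₙ` of the tails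
`λₙ, λₙ₊₁, …` decrease, and their minimal-norm points form a Cauchy sequence, since
`‖vₘ - vₙ‖² ≤ ‖vₘ‖² - ‖vₙ‖²` for `n ≤ m`; hence all `Kₙ` contain a common point `v`. Forward
convex combinations within `2⁻ⁿ` of `v` in `L²` converge to `v` almost surely, because
`∑ₙ ‖μₙ - v‖²` has finite integral.
-/

open MeasureTheory Filter Topology
open scoped ENNReal NNReal

namespace RandomNormed

theorem exists_sum_range_eq_of_mem_convexHull_range {E : Type*} [AddCommGroup E] [Module ℝ E]
    {g : ℕ → E} {x : E} (hx : x ∈ convexHull ℝ (Set.range g)) :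
    ∃ (L : ℕ) (c : ℕ → ℝ), (∀ j, 0 ≤ c j) ∧ ∑ j ∈ Finset.range (L + 1), c j = 1 ∧
      ∑ j ∈ Finset.range (L + 1), c j • g j = x := by
  classical
  rw [convexHull_range_eq_exists_affineCombination] at hx
  obtain ⟨s, w, hw₀, hw₁, rfl⟩ := hx
  have hs : s ⊆ Finset.range (s.sup id + 1) := fun j hj =>
    Finset.mem_range_succ_iff.2 (Finset.le_sup (f := id) hj)
  refine ⟨s.sup id, fun j => if j ∈ s then w j else 0, fun j => ?_, ?_, ?_⟩
  · dsimp only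
    split_ifs with hj
    exacts [hw₀ j hj, le_rfl]
  · rw [Finset.sum_ite_mem, Finset.inter_eq_right.2 hs, hw₁]
  · simp only [ite_smul, zero_smul]
    rw [Finset.sum_ite_mem, Finset.inter_eq_right.2 hs,
      s.affineCombination_eq_linear_combination g w hw₁]

section InnerProductSpace

variable {H : Type*} [NormedAddCommGroup H] [InnerProductSpace ℝ H]

theorem exists_mem_forall_norm_sub_sq_add_norm_sq_le {K : Set H} (hne : K.Nonempty)
    (hK : IsComplete K) (hconv : Convex ℝ K) :
    ∃ v ∈ K, ∀ w ∈ K, ‖w - v‖ ^ 2 + ‖v‖ ^ 2 ≤ ‖w‖ ^ 2 := by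
  obtain ⟨v, hvK, hv⟩ := exists_norm_eq_iInf_of_complete_convex hne hK hconv 0
  refine ⟨v, hvK, fun w hw => ?_⟩
  have hinner : 0 ≤ inner ℝ v (w - v) := by
    have := (norm_eq_iInf_iff_real_inner_le_zero hconv hvK).1 hv w hw
    rwa [zero_sub, inner_neg_left, neg_nonpos] at this
  have hexpand : ‖w‖ ^ 2 = ‖v‖ ^ 2 + 2 * inner ℝ v (w - v) + ‖w - v‖ ^ 2 := by
    rw [← norm_add_sq_real, add_sub_cancel]
  linarith

variable [CompleteSpace H]

theorem nonempty_iInter_of_antitone_of_convex_of_isClosed {K : ℕ → Set H}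
    (hanti : Antitone K) (hconv : ∀ n, Convex ℝ (K n)) (hclosed : ∀ n, IsClosed (K n))
    {C : ℝ} (hC : ∀ n, ∃ x ∈ K n, ‖x‖ ≤ C) : (⋂ n, K n).Nonempty := by
  have hne : ∀ n, (K n).Nonempty := fun n => let ⟨x, hx, _⟩ := hC n; ⟨x, hx⟩
  choose v hvK hv using fun n =>
    exists_mem_forall_norm_sub_sq_add_norm_sq_le (hne n) (hclosed n).isComplete (hconv n)
  have hstep : ∀ {n m}, n ≤ m → ‖v m - v n‖ ^ 2 + ‖v n‖ ^ 2 ≤ ‖v m‖ ^ 2 :=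
    fun h => hv _ _ (hanti h (hvK _))
  have hmono : Monotone fun n => ‖v n‖ ^ 2 := fun n m h => by
    have := hstep h
    nlinarith [sq_nonneg ‖v m - v n‖]
  have hbdd : BddAbove (Set.range fun n => ‖v n‖ ^ 2) := by
    refine ⟨C ^ 2, Set.forall_mem_range.2 fun n => ?_⟩
    obtain ⟨x, hxK, hxC⟩ := hC n
    have := hv n x hxK
    nlinarith [sq_nonneg ‖x - v n‖, norm_nonneg x]
  have hcauchy : CauchySeq v := by
    refine Metric.cauchySeq_iff'.2 fun ε hε => ?_
    obtain ⟨N, hN⟩ := Metric.cauchySeq_iff'.1 (tendsto_atTop_ciSup hmono hbdd).cauchySeq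
      (ε ^ 2) (by positivity)
    refine ⟨N, fun n hn => ?_⟩
    have h₁ := hstep hn
    have h₂ := hN n hn
    rw [Real.dist_eq, abs_lt] at h₂
    rw [dist_eq_norm]
    nlinarith [norm_nonneg (v n - v N)]
  obtain ⟨w, hw⟩ := cauchySeq_tendsto_of_complete hcauchy
  exact ⟨w, Set.mem_iInter.2 fun n => (hclosed n).mem_of_tendsto hw
    (eventually_atTop.2 ⟨n, fun m hm => hanti hm (hvK m)⟩)⟩

theorem exists_forall_norm_sum_range_smul_sub_lt {f : ℕ → H} {C : ℝ} (hf : ∀ n, ‖f n‖ ≤ C) :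
    ∃ v : H, ∀ n, ∀ ε > 0, ∃ (L : ℕ) (c : ℕ → ℝ), (∀ j, 0 ≤ c j) ∧
      ∑ j ∈ Finset.range (L + 1), c j = 1 ∧
      ‖∑ j ∈ Finset.range (L + 1), c j • f (n + j) - v‖ < ε := by
  set K : ℕ → Set H := fun n => closure (convexHull ℝ (Set.range fun j => f (n + j)))
  have hanti : Antitone K := fun n m hnm => closure_mono <| convexHull_mono <| by
    rintro _ ⟨j, rfl⟩
    exact ⟨m - n + j, by simp only [← add_assoc, Nat.add_sub_cancel' hnm]⟩
  have hC : ∀ n, ∃ x ∈ K n, ‖x‖ ≤ C := fun n =>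
    ⟨f n, subset_closure <| subset_convexHull ℝ _ ⟨0, rfl⟩, hf n⟩
  obtain ⟨v, hv⟩ := nonempty_iInter_of_antitone_of_convex_of_isClosed hanti
    (fun n => (convex_convexHull ℝ _).closure) (fun n => isClosed_closure) hC
  refine ⟨v, fun n ε hε => ?_⟩
  obtain ⟨x, hx, hvx⟩ := Metric.mem_closure_iff.1 (Set.mem_iInter.1 hv n) ε hε
  obtain ⟨L, c, hc₀, hc₁, rfl⟩ := exists_sum_range_eq_of_mem_convexHull_range hx
  exact ⟨L, c, hc₀, hc₁, by rwa [← dist_eq_norm, dist_comm]⟩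

end InnerProductSpace

section Lp

variable {α E : Type*} [MeasurableSpace α] {μ : Measure α}

theorem ae_tendsto_zero_of_tsum_lintegral_ne_top {F : ℕ → α → ℝ≥0∞}
    (hF : ∀ n, AEMeasurable (F n) μ) (h : ∑' n, ∫⁻ x, F n x ∂μ ≠ ∞) :
    ∀ᵐ x ∂μ, Tendsto (fun n => F n x) atTop (𝓝 0) := by
  rw [← lintegral_tsum hF] at h
  filter_upwards [ae_lt_top' (AEMeasurable.tsum hF) h] with x hx
  exact ENNReal.tendsto_atTop_zero_of_tsum_ne_top hx.ne

variable [NormedAddCommGroup E] {p : ℝ≥0∞} [Fact (1 ≤ p)]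

theorem Lp.lintegral_enorm_sub_rpow (f g : Lp E p μ) (hp : p ≠ ∞) :
    ∫⁻ x, ‖f x - g x‖ₑ ^ p.toReal ∂μ = ENNReal.ofReal (‖f - g‖ ^ p.toReal) := by
  have hp₀ : p ≠ 0 := (zero_lt_one.trans_le Fact.out).ne'
  rw [← ENNReal.ofReal_rpow_of_nonneg (norm_nonneg _) ENNReal.toReal_nonneg, ofReal_norm,
    Lp.enorm_def, eLpNorm_eq_eLpNorm' hp₀ hp,
    ← lintegral_rpow_enorm_eq_rpow_eLpNorm' (ENNReal.toReal_pos hp₀ hp)]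
  refine lintegral_congr_ae ?_
  filter_upwards [Lp.coeFn_sub f g] with x hx
  rw [hx, Pi.sub_apply]

theorem Lp.ae_tendsto_of_summable_norm_sub_rpow (hp : p ≠ ∞) {f : ℕ → Lp E p μ} {g : Lp E p μ}
    (h : Summable fun n => ‖f n - g‖ ^ p.toReal) :
    ∀ᵐ x ∂μ, Tendsto (fun n => f n x) atTop (𝓝 (g x)) := by
  have hq : 0 < p.toReal := ENNReal.toReal_pos (zero_lt_one.trans_le Fact.out).ne' hp
  have hmeas : ∀ n, AEMeasurable (fun x => ‖f n x - g x‖ₑ ^ p.toReal) μ := fun n =>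
    (((Lp.aestronglyMeasurable (f n)).sub (Lp.aestronglyMeasurable g)).enorm).pow_const _
  have hsum : ∑' n, ∫⁻ x, ‖f n x - g x‖ₑ ^ p.toReal ∂μ ≠ ∞ := by
    simp_rw [Lp.lintegral_enorm_sub_rpow _ _ hp]
    rw [← ENNReal.ofReal_tsum_of_nonneg (fun n => by positivity) h]
    exact ENNReal.ofReal_ne_top
  filter_upwards [ae_tendsto_zero_of_tsum_lintegral_ne_top hmeas hsum] with x hx
  rw [tendsto_iff_edist_tendsto_0]
  have := (ENNReal.continuous_rpow_const (y := p.toReal⁻¹)).tendsto 0 |>.comp hx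
  rw [ENNReal.zero_rpow_of_pos (inv_pos.2 hq)] at this
  simpa only [Function.comp_def, ENNReal.rpow_rpow_inv hq.ne', edist_eq_enorm_sub] using this

end Lp

theorem norm_le_toReal_iSup_enorm {ι E : Type*} [SeminormedAddCommGroup E] {x : ι → E} {C : ℝ}
    (hC : ∀ i, ‖x i‖ ≤ C) (i : ι) : ‖x i‖ ≤ (⨆ j, ‖x j‖ₑ).toReal := by
  have hfin : ⨆ j, ‖x j‖ₑ ≠ ∞ := ne_top_of_le_ne_top ENNReal.ofReal_ne_top <|
    iSup_le fun j => by rw [← ofReal_norm]; exact ENNReal.ofReal_le_ofReal (hC j)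
  rw [← toReal_enorm]
  exact ENNReal.toReal_mono hfin (le_iSup (fun j => ‖x j‖ₑ) i)

section RandomVectors

variable {Ω E F : Type*} [MeasurableSpace Ω] {μ : Measure Ω}
  [NormedAddCommGroup E] [NormedSpace ℝ E] [NormedAddCommGroup F] [NormedSpace ℝ F]

def ForwardConvexCombinationsConvergeAE (μ : Measure Ω) (lam : ℕ → Ω → E) : Prop :=
  ∃ (l : ℕ → ℕ) (t : ℕ → ℕ → ℝ) (m : Ω → E),
    (∀ n k, k ≤ l n → 0 ≤ t n k) ∧
    (∀ n, ∑ k ∈ Finset.range (l n + 1), t n k = 1) ∧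
    AEStronglyMeasurable m μ ∧
    ∀ᵐ ω ∂μ, Tendsto (fun n => ∑ k ∈ Finset.range (l n + 1), t n k • lam (n + k) ω)
      atTop (𝓝 (m ω))

namespace ForwardConvexCombinationsConvergeAE

variable {lam : ℕ → Ω → E}

theorem smul (h : ForwardConvexCombinationsConvergeAE μ lam) {c : Ω → ℝ}
    (hc : AEStronglyMeasurable c μ) :
    ForwardConvexCombinationsConvergeAE μ fun n ω => c ω • lam n ω := by
  obtain ⟨l, t, m, ht₀, ht₁, hm, hlim⟩ := h
  refine ⟨l, t, fun ω => c ω • m ω, ht₀, ht₁, hc.smul hm, ?_⟩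
  filter_upwards [hlim] with ω hω
  simpa only [smul_comm (t _ _) (c ω), ← Finset.smul_sum] using hω.const_smul (c ω)

theorem map (h : ForwardConvexCombinationsConvergeAE μ lam) (L : E →L[ℝ] F) :
    ForwardConvexCombinationsConvergeAE μ fun n ω => L (lam n ω) := by
  obtain ⟨l, t, m, ht₀, ht₁, hm, hlim⟩ := h
  refine ⟨l, t, fun ω => L (m ω), ht₀, ht₁, L.continuous.comp_aestronglyMeasurable hm, ?_⟩
  filter_upwards [hlim] with ω hω
  simpa only [Function.comp_def, map_sum, map_smul] using (L.continuous.tendsto _).comp hω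

end ForwardConvexCombinationsConvergeAE

variable {H : Type*} [NormedAddCommGroup H] [InnerProductSpace ℝ H] [CompleteSpace H]
  [IsFiniteMeasure μ] {lam : ℕ → Ω → H}

theorem forwardConvexCombinationsConvergeAE_of_ae_bounded
    (hmeas : ∀ n, AEStronglyMeasurable (lam n) μ) (C : ℝ)
    (hbdd : ∀ᵐ ω ∂μ, ∀ n, ‖lam n ω‖ ≤ C) : ForwardConvexCombinationsConvergeAE μ lam := by
  have hLp : ∀ n, MemLp (lam n) 2 μ := fun n =>
    MemLp.of_bound (hmeas n) C (hbdd.mono fun _ h => h n)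
  set f : ℕ → Lp H 2 μ := fun n => (hLp n).toLp
  have hf : ∀ n, ‖f n‖ ≤ measureUnivNNReal μ ^ (2 : ℝ≥0∞).toReal⁻¹ * |C| := fun n =>
    Lp.norm_le_of_ae_bound (abs_nonneg C) <| by
      filter_upwards [(hLp n).coeFn_toLp, hbdd] with ω hω hC
      exact hω ▸ (hC n).trans (le_abs_self C)
  obtain ⟨v, hv⟩ := exists_forall_norm_sum_range_smul_sub_lt hf
  -- The tolerance `2⁻ⁿ` makes the squared `L²` distances summable.
  choose l t ht₀ ht₁ hclose using fun n => hv n ((1 / 2) ^ n) (by positivity)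
  have hcoe : ∀ n, ⇑(∑ k ∈ Finset.range (l n + 1), t n k • f (n + k)) =ᵐ[μ]
      fun ω => ∑ k ∈ Finset.range (l n + 1), t n k • lam (n + k) ω := fun n => by
    filter_upwards [Lp.coeFn_fun_finsetSum (Finset.range (l n + 1)) fun k => t n k • f (n + k),
      ae_all_iff.2 fun k => Lp.coeFn_smul (t n k) (f (n + k)),
      ae_all_iff.2 fun k => (hLp k).coeFn_toLp] with ω hsum hsmul hlam
    simp only [hsum, hsmul, Pi.smul_apply, f, hlam]
  have hsummable : Summable fun n =>
      ‖∑ k ∈ Finset.range (l n + 1), t n k • f (n + k) - v‖ ^ (2 : ℝ≥0∞).toReal := by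
    refine .of_nonneg_of_le (fun n => by positivity) (fun n => ?_)
      (summable_geometric_of_lt_one (r := 1 / 4) (by norm_num) (by norm_num))
    rw [ENNReal.toReal_ofNat, Real.rpow_two]
    calc _ ≤ ((1 / 2) ^ n) ^ 2 := pow_le_pow_left₀ (norm_nonneg _) (hclose n).le 2
      _ = (1 / 4) ^ n := by rw [← pow_mul, mul_comm, pow_mul]; norm_num
  refine ⟨l, t, v, fun n k _ => ht₀ n k, ht₁, Lp.aestronglyMeasurable v, ?_⟩
  filter_upwards [Lp.ae_tendsto_of_summable_norm_sub_rpow ENNReal.ofNat_ne_top hsummable,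
    ae_all_iff.2 hcoe] with ω hω hcoeω
  simpa only [hcoeω] using hω

theorem forwardConvexCombinationsConvergeAE_of_ae_bddAbove
    (hmeas : ∀ n, AEStronglyMeasurable (lam n) μ)
    (hbdd : ∀ᵐ ω ∂μ, ∃ C : ℝ, ∀ n, ‖lam n ω‖ ≤ C) : ForwardConvexCombinationsConvergeAE μ lam := by
  set r : Ω → ℝ := fun ω => 1 + (⨆ n, ‖lam n ω‖ₑ).toReal
  have hr : AEMeasurable r μ :=
    aemeasurable_const.add (AEMeasurable.iSup fun n => (hmeas n).enorm).ennreal_toReal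
  have hr_pos : ∀ ω, 0 < r ω := fun ω => by positivity
  have hscaled : ForwardConvexCombinationsConvergeAE μ fun n ω => (r ω)⁻¹ • lam n ω := by
    refine forwardConvexCombinationsConvergeAE_of_ae_bounded
      (fun n => hr.inv.aestronglyMeasurable.smul (hmeas n)) 1 ?_
    filter_upwards [hbdd] with ω ⟨C, hC⟩ n
    rw [norm_smul, norm_inv, Real.norm_of_nonneg (hr_pos ω).le, inv_mul_le_one₀ (hr_pos ω)]
    linarith [norm_le_toReal_iSup_enorm hC n]
  simpa only [smul_inv_smul₀ (hr_pos _).ne'] using hscaled.smul hr.aestronglyMeasurable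

end RandomVectors

/-- **Komlos-type principle of forward convex combinations.**  If `(λₙ)` is an a.s.
bounded sequence of `ℝᵈ`-valued random vectors, then there are forward convex
combinations `μₙ = Σ_{k≤l(n)} t(n,k) λ_{n+k}` converging almost surely. -/
theorem forward_convex_combinations_converge_ae
    {Ω : Type*} [MeasurableSpace Ω] (μ : Measure Ω) [IsProbabilityMeasure μ] (d : ℕ)
    (lam : ℕ → Ω → (Fin d → ℝ)) (hmeas : ∀ n, AEMeasurable (lam n) μ)
    (hbdd : ∀ᵐ ω ∂μ, ∃ C : ℝ, ∀ n, ‖lam n ω‖ ≤ C) :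
    ∃ (l : ℕ → ℕ) (t : ℕ → ℕ → ℝ) (m : Ω → Fin d → ℝ),
      (∀ n k, k ≤ l n → 0 ≤ t n k) ∧
      (∀ n, ∑ k ∈ Finset.range (l n + 1), t n k = 1) ∧
      AEMeasurable m μ ∧
      ∀ᵐ ω ∂μ, Tendsto (fun n => ∑ k ∈ Finset.range (l n + 1), t n k • lam (n + k) ω)
        atTop (nhds (m ω)) := by
  set e := EuclideanSpace.equiv (Fin d) ℝ
  have heuclid : ForwardConvexCombinationsConvergeAE μ fun n ω => e.symm (lam n ω) := by
    refine forwardConvexCombinationsConvergeAE_of_ae_bddAbove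
      (fun n => e.symm.continuous.comp_aestronglyMeasurable (hmeas n).aestronglyMeasurable) ?_
    filter_upwards [hbdd] with ω ⟨C, hC⟩
    exact ⟨‖e.symm.toContinuousLinearMap‖ * C, fun n =>
      (e.symm.toContinuousLinearMap.le_opNorm (lam n ω)).trans
        (mul_le_mul_of_nonneg_left (hC n) (norm_nonneg _))⟩
  have hback : ForwardConvexCombinationsConvergeAE μ lam := by
    simpa only [ContinuousLinearEquiv.coe_coe, ContinuousLinearEquiv.apply_symm_apply] using
      heuclid.map e.toContinuousLinearMap
  obtain ⟨l, t, m, ht₀, ht₁, hm, hlim⟩ := hback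
  exact ⟨l, t, m, ht₀, ht₁, hm.aemeasurable, hlim⟩

end RandomNormed
end

section
/- Let x₁,…,x_d ∈ L⁰(F,ℝᵈ). The L⁰-convex hull Conv_{L⁰}{x₁,…,x_d} := {λ₁x₁ + ⋯ + λ_d x_d : λᵢ ∈ L⁰₊(F), Σᵢ λᵢ = 1} is a closed subset of L⁰(F,ℝᵈ) in the topology of convergence in probability. -/
/-!
For a.e. `ω`, each `yₙ(ω)` lies in the compact set `conv{x₁(ω), …, x_d(ω)}`, so by an a.e.
convergent subsequence so does `z(ω)`. What remains is to choose the weights measurably in `ω`.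
The weight vector of least Euclidean norm representing `z(ω)` is unique by strict convexity,
so every cluster point of a sequence of measurable near-minimisers, picked from a countable
dense subset of the simplex, equals it; hence it is an a.e. limit of measurable maps.
-/

open MeasureTheory Filter Topology Set

namespace RandomNormed

/-- Membership (as an equivalence class) in the `L⁰`-convex hull
`Conv_{L⁰}{x₁, …, x_d} = {Σᵢ λᵢ xᵢ : λᵢ ∈ L⁰₊(F), Σᵢ λᵢ = 1}` of `x₁, …, x_d ∈ L⁰(F,ℝᵈ)`. -/
def MemL0ConvexHull {Ω : Type*} [MeasurableSpace Ω] (μ : Measure Ω) (d : ℕ)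
    (x : Fin d → Ω → (Fin d → ℝ)) (y : Ω → (Fin d → ℝ)) : Prop :=
  ∃ lam : Fin d → Ω → ℝ, (∀ i, AEMeasurable (lam i) μ) ∧
    (∀ i, ∀ᵐ ω ∂μ, 0 ≤ lam i ω) ∧ (∀ᵐ ω ∂μ, ∑ i, lam i ω = 1) ∧
    ∀ᵐ ω ∂μ, y ω = ∑ i, lam i ω • x i ω

theorem convexHull_range_eq_image_stdSimplex {R ι E : Type*} [Field R] [LinearOrder R]
    [IsStrictOrderedRing R] [Fintype ι] [AddCommGroup E] [Module R E] (v : ι → E) :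
    convexHull R (range v) = (fun w : ι → R => ∑ i, w i • v i) '' stdSimplex R ι := by
  classical
  change _ = Fintype.linearCombination R v '' _
  rw [← convexHull_basis_eq_stdSimplex, LinearMap.image_convexHull, ← range_comp]
  congr
  ext i
  simp [Fintype.linearCombination_apply, ite_smul]

theorem strictConvexOn_univ_sum_sq (ι : Type*) [Fintype ι] :
    StrictConvexOn ℝ univ fun a : ι → ℝ => ∑ i, a i ^ 2 := by
  refine ⟨convex_univ, fun x _ y _ hxy a b ha hb hab => ?_⟩
  obtain ⟨j, hj⟩ := Function.ne_iff.1 hxy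
  have hsq : StrictConvexOn ℝ univ fun t : ℝ => t ^ 2 := even_two.strictConvexOn_pow two_ne_zero
  simp only [Pi.add_apply, Pi.smul_apply, smul_eq_mul, Finset.mul_sum, ← Finset.sum_add_distrib]
  exact Finset.sum_lt_sum (fun i _ => hsq.convexOn.2 trivial trivial ha.le hb.le hab)
    ⟨j, Finset.mem_univ _, hsq.2 trivial trivial hj ha hb hab⟩

theorem subsingleton_isMinOn_sum_sq {ι E : Type*} [Fintype ι] [AddCommGroup E] [Module ℝ E]
    (v : ι → E) (e : E) :
    {w | w ∈ {w ∈ stdSimplex ℝ ι | ∑ i, w i • v i = e} ∧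
      IsMinOn (fun w => ∑ i, w i ^ 2) {w ∈ stdSimplex ℝ ι | ∑ i, w i • v i = e} w}.Subsingleton :=
  fun _ ha _ hb => ((strictConvexOn_univ_sum_sq ι).subset (subset_univ _)
    ((convex_stdSimplex ℝ ι).inter ((convex_singleton e).linear_preimage
      (Fintype.linearCombination ℝ v)))).eq_of_isMinOn ha.2 hb.2 ha.1 hb.1

theorem exists_near_of_le_zero_of_denseRange {ι K : Type*} [TopologicalSpace K] {Q : ι → K}
    (hQ : DenseRange Q) {g φ : K → ℝ} (hg : Continuous g) (hφ : Continuous φ) {a : K}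
    (ha : g a ≤ 0) {ε δ : ℝ} (hε : 0 < ε) (hδ : 0 < δ) : ∃ m, g (Q m) < ε ∧ φ (Q m) < φ a + δ :=
  hQ.exists_mem_open ((isOpen_lt hg continuous_const).inter (isOpen_lt hφ continuous_const))
    ⟨a, ha.trans_lt hε, lt_add_of_pos_right _ hδ⟩

section MeasurableSelection

variable {Ω K : Type*} [MetricSpace K] [CompactSpace K] {g : Ω → K → ℝ} {φ : K → ℝ}

theorem exists_measurable_approx_argmin [MeasurableSpace Ω] [Nonempty K] [MeasurableSpace K]
    [BorelSpace K] (hg : ∀ a, Measurable fun ω => g ω a) (hgc : ∀ ω, Continuous (g ω))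
    (hφ : Continuous φ) {ε : ℝ} (hε : 0 < ε) :
    ∃ p : Ω → K, Measurable p ∧ ∀ ω, (∃ a, g ω a ≤ 0) →
      g ω (p ω) < ε ∧ ∀ a, g ω a ≤ 0 → φ (p ω) < φ a + ε := by
  classical
  obtain ⟨Q, hQ⟩ := TopologicalSpace.exists_dense_seq K
  obtain ⟨L, hL⟩ := (isCompact_range hφ).bddBelow
  obtain ⟨M, hM⟩ := (isCompact_range hφ).bddAbove
  -- the penalty `M + ε` exceeds every admissible value by at least `ε`
  set F : ℕ → Ω → ℝ := fun m ω => if g ω (Q m) < ε then φ (Q m) else M + ε with hF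
  have hF_meas : ∀ m, Measurable (F m) := fun m =>
    Measurable.ite (measurableSet_lt (hg _) measurable_const) measurable_const measurable_const
  have hF_bdd : ∀ ω, BddBelow (range fun m => F m ω) := by
    refine fun ω => ⟨L, ?_⟩
    rintro _ ⟨m, rfl⟩
    by_cases h : g ω (Q m) < ε
    · simpa [hF, h] using hL ⟨Q m, rfl⟩
    · simp only [hF, h, if_false]
      linarith [hL ⟨Q m, rfl⟩, hM ⟨Q m, rfl⟩]
  have hex : ∀ ω, ∃ m, F m ω < (⨅ m, F m ω) + ε := fun ω =>
    exists_lt_of_ciInf_lt (lt_add_of_pos_right _ hε)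
  refine ⟨fun ω => Q (Nat.find (hex ω)), measurable_from_top.comp (measurable_find hex
    fun m => measurableSet_lt (hF_meas m) ((Measurable.iInf hF_meas).add_const _)), ?_⟩
  rintro ω ⟨a₀, ha₀⟩
  have hinf_le : ∀ a, g ω a ≤ 0 → ⨅ m, F m ω ≤ φ a := fun a ha =>
    le_of_forall_pos_le_add fun δ hδ => by
      obtain ⟨m, hm, hmφ⟩ := exists_near_of_le_zero_of_denseRange hQ (hgc ω) hφ ha hε hδ
      calc ⨅ m, F m ω ≤ F m ω := ciInf_le (hF_bdd ω) m
        _ = φ (Q m) := if_pos hm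
        _ ≤ φ a + δ := hmφ.le
  have hfind := Nat.find_spec (hex ω)
  by_cases hadm : g ω (Q (Nat.find (hex ω))) < ε
  · refine ⟨hadm, fun a ha => ?_⟩
    simp only [hF, hadm, if_true] at hfind
    linarith [hinf_le a ha]
  · simp only [hF, hadm, if_false] at hfind
    linarith [hinf_le a₀ ha₀, hM ⟨a₀, rfl⟩]

theorem tendsto_of_approx_argmin {g : K → ℝ} (hg : Continuous g) (hφ : Continuous φ)
    {p : ℕ → K} {ε : ℕ → ℝ} (hε : Tendsto ε atTop (𝓝 0)) (hpg : ∀ n, g (p n) < ε n)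
    (hpφ : ∀ n a, g a ≤ 0 → φ (p n) < φ a + ε n)
    (huniq : {a | g a ≤ 0 ∧ IsMinOn φ {c | g c ≤ 0} a}.Subsingleton) {a : K} (ha : g a ≤ 0)
    (hmin : IsMinOn φ {c | g c ≤ 0} a) : Tendsto p atTop (𝓝 a) := by
  refine tendsto_nhds_of_unique_mapClusterPt fun c hc => huniq ?_ ⟨ha, hmin⟩
  obtain ⟨ψ, hψ, hlim⟩ := hc.tendsto_subseq
  have hεψ : Tendsto (ε ∘ ψ) atTop (𝓝 0) := hε.comp hψ.tendsto_atTop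
  have hgc : g c ≤ 0 := le_of_tendsto_of_tendsto' ((hg.tendsto c).comp hlim) hεψ
    fun k => (hpg (ψ k)).le
  refine ⟨hgc, fun b hb => ?_⟩
  have hbound : Tendsto (fun k => φ b + ε (ψ k)) atTop (𝓝 (φ b)) := by
    simpa using tendsto_const_nhds.add hεψ
  exact le_of_tendsto_of_tendsto' ((hφ.tendsto c).comp hlim) hbound
    fun k => (hpφ (ψ k) b hb).le

theorem exists_aemeasurable_le_zero [MeasurableSpace Ω] {μ : Measure Ω} [Nonempty K]
    [MeasurableSpace K] [BorelSpace K] (hg : ∀ a, Measurable fun ω => g ω a)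
    (hgc : ∀ ω, Continuous (g ω)) (hφ : Continuous φ) (hne : ∀ᵐ ω ∂μ, ∃ a, g ω a ≤ 0)
    (huniq : ∀ᵐ ω ∂μ, {a | g ω a ≤ 0 ∧ IsMinOn φ {c | g ω c ≤ 0} a}.Subsingleton) :
    ∃ f : Ω → K, AEMeasurable f μ ∧ ∀ᵐ ω ∂μ, g ω (f ω) ≤ 0 := by
  choose p hp_meas hp using fun n : ℕ =>
    exists_measurable_approx_argmin hg hgc hφ (Nat.one_div_pos_of_nat (n := n))
  have hlim : ∀ᵐ ω ∂μ, ∃ a, g ω a ≤ 0 ∧ Tendsto (p · ω) atTop (𝓝 a) := by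
    filter_upwards [hne, huniq] with ω hω hω_uniq
    have hZ : IsCompact {c | g ω c ≤ 0} := (isClosed_le (hgc ω) continuous_const).isCompact
    obtain ⟨a, ha, hmin⟩ := hZ.exists_isMinOn hω hφ.continuousOn
    exact ⟨a, ha, tendsto_of_approx_argmin (hgc ω) hφ tendsto_one_div_add_atTop_nhds_zero_nat
      (fun n => (hp n ω hω).1) (fun n => (hp n ω hω).2) hω_uniq ha hmin⟩
  have hlim' : ∀ᵐ ω ∂μ, g ω (limUnder atTop (p · ω)) ≤ 0 ∧
      Tendsto (p · ω) atTop (𝓝 (limUnder atTop (p · ω))) := hlim.mono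
    fun ω ⟨a, ha, hpa⟩ => hpa.limUnder_eq.symm ▸ ⟨ha, hpa⟩
  exact ⟨_, aemeasurable_of_tendsto_metrizable_ae' (fun n => (hp_meas n).aemeasurable)
    (hlim'.mono fun _ h => h.2), hlim'.mono fun _ h => h.1⟩

end MeasurableSelection

section L0ConvexHull

variable {Ω : Type*} [MeasurableSpace Ω] {μ : Measure Ω} {d : ℕ} {x : Fin d → Ω → Fin d → ℝ}

theorem MemL0ConvexHull.congr {x' : Fin d → Ω → Fin d → ℝ} {y y' : Ω → Fin d → ℝ}
    (h : MemL0ConvexHull μ d x y) (hx : ∀ i, x i =ᵐ[μ] x' i) (hy : y =ᵐ[μ] y') :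
    MemL0ConvexHull μ d x' y' := by
  obtain ⟨lam, hlam_meas, hlam_nonneg, hlam_sum, hrep⟩ := h
  refine ⟨lam, hlam_meas, hlam_nonneg, hlam_sum, ?_⟩
  filter_upwards [hrep, hy, ae_all_iff.2 hx] with ω hω hyω hxω
  simp only [← hyω, hω, hxω]

theorem MemL0ConvexHull.ae_mem_convexHull {y : Ω → Fin d → ℝ} (h : MemL0ConvexHull μ d x y) :
    ∀ᵐ ω ∂μ, y ω ∈ convexHull ℝ (range fun i => x i ω) := by
  obtain ⟨lam, -, hlam_nonneg, hlam_sum, hrep⟩ := h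
  filter_upwards [ae_all_iff.2 hlam_nonneg, hlam_sum, hrep] with ω hω_nonneg hω_sum hω
  rw [convexHull_range_eq_image_stdSimplex]
  exact ⟨fun i => lam i ω, ⟨hω_nonneg, hω_sum⟩, hω.symm⟩

theorem memL0ConvexHull_of_ae_mem_convexHull {z : Ω → Fin d → ℝ} (hx : ∀ i, Measurable (x i))
    (hz : Measurable z) (h : ∀ᵐ ω ∂μ, z ω ∈ convexHull ℝ (range fun i => x i ω)) :
    MemL0ConvexHull μ d x z := by
  rcases eq_zero_or_neZero μ with rfl | _
  · exact ⟨0, fun _ => aemeasurable_zero_measure, by simp, by simp, by simp⟩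
  simp only [convexHull_range_eq_image_stdSimplex] at h
  have : Nonempty (stdSimplex ℝ (Fin d)) :=
    let ⟨_, a, ha, _⟩ := h.exists
    ⟨⟨a, ha⟩⟩
  let g : Ω → stdSimplex ℝ (Fin d) → ℝ := fun ω a => dist (∑ i, (a : Fin d → ℝ) i • x i ω) (z ω)
  have hg_meas : ∀ a, Measurable fun ω => g ω a := fun a =>
    (Finset.measurable_sum _ fun i _ => (hx i).const_smul ((a : Fin d → ℝ) i)).dist hz
  have hg_cont : ∀ ω, Continuous (g ω) := fun ω =>
    (continuous_finsetSum _ fun i _ =>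
      ((continuous_apply i).comp continuous_subtype_val).smul continuous_const).dist
        continuous_const
  let φ : stdSimplex ℝ (Fin d) → ℝ := fun a => ∑ i, (a : Fin d → ℝ) i ^ 2
  have hφ : Continuous φ :=
    continuous_finsetSum _ fun i _ => ((continuous_apply i).comp continuous_subtype_val).pow 2
  have huniq : ∀ ω, {a | g ω a ≤ 0 ∧ IsMinOn φ {c | g ω c ≤ 0} a}.Subsingleton := by
    rintro ω a ⟨ha, ha_min⟩ b ⟨hb, hb_min⟩
    have hmin : ∀ c, IsMinOn φ {c | g ω c ≤ 0} c →
        IsMinOn (fun v => ∑ i, v i ^ 2) {v ∈ stdSimplex ℝ (Fin d) | ∑ i, v i • x i ω = z ω} c :=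
      fun c hc v hv => hc (show g ω ⟨v, hv.1⟩ ≤ 0 from (dist_eq_zero.2 hv.2).le)
    exact Subtype.ext (subsingleton_isMinOn_sum_sq _ _ ⟨⟨a.2, dist_le_zero.1 ha⟩, hmin a ha_min⟩
      ⟨⟨b.2, dist_le_zero.1 hb⟩, hmin b hb_min⟩)
  obtain ⟨f, hf_meas, hf⟩ := exists_aemeasurable_le_zero hg_meas hg_cont hφ
    (h.mono fun ω ⟨a, ha, hrep⟩ => ⟨⟨a, ha⟩, (dist_eq_zero.2 hrep).le⟩) (ae_of_all _ huniq)
  exact ⟨fun i ω => (f ω : Fin d → ℝ) i,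
    fun i => ((measurable_pi_apply i).comp measurable_subtype_coe).comp_aemeasurable hf_meas,
    fun i => ae_of_all _ fun ω => (f ω).2.1 i, ae_of_all _ fun ω => (f ω).2.2,
    hf.mono fun ω hω => (dist_le_zero.1 hω).symm⟩

end L0ConvexHull

theorem L0_convex_hull_closed_general
    {Ω : Type*} [MeasurableSpace Ω] (μ : Measure Ω) (d : ℕ)
    (x : Fin d → Ω → (Fin d → ℝ)) (hx : ∀ i, AEMeasurable (x i) μ)
    (y : ℕ → Ω → (Fin d → ℝ)) (z : Ω → (Fin d → ℝ)) (hz : AEMeasurable z μ)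
    (hy : ∀ n, MemL0ConvexHull μ d x (y n))
    (hconv : TendstoInMeasure μ y atTop z) :
    MemL0ConvexHull μ d x z := by
  obtain ⟨ns, -, hns⟩ := hconv.exists_seq_tendsto_ae
  have hz_mem : ∀ᵐ ω ∂μ, z ω ∈ convexHull ℝ (range fun i => x i ω) := by
    filter_upwards [hns, ae_all_iff.2 fun n => (hy n).ae_mem_convexHull] with ω hlim hmem
    exact (finite_range _).isClosed_convexHull ℝ |>.mem_of_tendsto hlim
      (Eventually.of_forall fun k => hmem (ns k))
  refine (memL0ConvexHull_of_ae_mem_convexHull (fun i => (hx i).measurable_mk)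
    hz.measurable_mk ?_).congr (fun i => (hx i).ae_eq_mk.symm) hz.ae_eq_mk.symm
  filter_upwards [hz_mem, ae_all_iff.2 fun i => (hx i).ae_eq_mk, hz.ae_eq_mk] with ω hω hxω hzω
  simpa only [← hzω, ← hxω] using hω

/-- **The `L⁰`-convex hull of finitely many elements of `L⁰(F,ℝᵈ)` is closed** in the
topology of convergence in probability: if each `yₙ` lies in the hull and `yₙ → z` in
measure, then `z` lies in the hull. -/
theorem L0_convex_hull_closed
    {Ω : Type*} [MeasurableSpace Ω] (μ : Measure Ω) [IsProbabilityMeasure μ] (d : ℕ)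
    (x : Fin d → Ω → (Fin d → ℝ)) (hx : ∀ i, AEMeasurable (x i) μ)
    (y : ℕ → Ω → (Fin d → ℝ)) (z : Ω → (Fin d → ℝ)) (hz : AEMeasurable z μ)
    (hy : ∀ n, MemL0ConvexHull μ d x (y n))
    (hconv : TendstoInMeasure μ y atTop z) :
    MemL0ConvexHull μ d x z :=
  L0_convex_hull_closed_general μ d x hx y z hz hy hconv

end RandomNormed
end

section
/- Let x₁,…,x_d ∈ L⁰(F,ℝᵈ). The finitely generated L⁰-convex cone cone_{L⁰}{x₁,…,x_d} := {λ₁x₁ + ⋯ + λ_d x_d : λᵢ ∈ L⁰₊(F)} is a closed subset of L⁰(F,ℝᵈ) in the topology of convergence in probability. -/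
/-!
For fixed `ω`, the cone generated by `x₁(ω), …, x_d(ω)` is closed in `ℝᵈ`: by conic
Carathéodory every point of it is a nonnegative combination of a linearly independent
subfamily `(xᵢ)_{i ∈ S}`, and on such a subfamily the coefficients are a continuous (least
squares) function of the point. Along an almost surely convergent subsequence, `z(ω)` therefore
lies in the cone for almost every `ω`. The least squares coefficients also depend measurably
on `(x(ω), z(ω))`, so choosing at each `ω` one of the finitely many index sets `S` that
works gives measurable coefficients for `z`.
-/

open MeasureTheory Filter Topology

namespace RandomNormed

/-- Membership (as an equivalence class) in the finitely generated `L⁰`-convex cone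
`cone_{L⁰}{x₁, …, x_d} = {Σᵢ λᵢ xᵢ : λᵢ ∈ L⁰₊(F)}` of `x₁, …, x_d ∈ L⁰(F,ℝᵈ)`. -/
def MemL0Cone {Ω : Type*} [MeasurableSpace Ω] (μ : Measure Ω) (d : ℕ)
    (x : Fin d → Ω → (Fin d → ℝ)) (y : Ω → (Fin d → ℝ)) : Prop :=
  ∃ lam : Fin d → Ω → ℝ, (∀ i, AEMeasurable (lam i) μ) ∧
    (∀ i, ∀ᵐ ω ∂μ, 0 ≤ lam i ω) ∧
    ∀ᵐ ω ∂μ, y ω = ∑ i, lam i ω • x i ω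

end RandomNormed

open Finset Matrix

theorem linearIndepOn_iff_of_fintype {R M ι : Type*} [Ring R] [AddCommGroup M] [Module R M]
    [Fintype ι] {v : ι → M} {s : Set ι} :
    LinearIndepOn R v s ↔ ∀ g : ι → R, Function.support g ⊆ s → ∑ i, g i • v i = 0 → g = 0 := by
  rw [linearIndepOn_iff]
  refine Finsupp.equivFunOnFinite.forall_congr fun {l} => ?_
  rw [Finsupp.mem_supported, Finsupp.linearCombination_apply,
    Finsupp.sum_fintype _ _ fun i => zero_smul R (v i), ← Finsupp.fun_support_eq,
    ← Finsupp.coe_eq_zero]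
  rfl

theorem PointedCone.mem_hull_range_iff {𝕜 E ι : Type*} [Semiring 𝕜] [PartialOrder 𝕜]
    [IsOrderedRing 𝕜] [AddCommMonoid E] [Module 𝕜 E] [Fintype ι] {v : ι → E} {w : E} :
    w ∈ PointedCone.hull 𝕜 (Set.range v) ↔ ∃ c : ι → 𝕜, 0 ≤ c ∧ ∑ i, c i • v i = w := by
  rw [PointedCone.hull, Submodule.mem_span_range_iff_exists_fun]
  constructor
  · rintro ⟨c, rfl⟩
    exact ⟨fun i => c i, fun i => (c i).2, by simp [Nonneg.coe_smul]⟩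
  · rintro ⟨c, hc, rfl⟩
    exact ⟨fun i => ⟨c i, hc i⟩, by simp [Nonneg.mk_smul]⟩

section Caratheodory

variable {𝕜 E ι : Type*} [Field 𝕜] [LinearOrder 𝕜] [IsStrictOrderedRing 𝕜]
  [AddCommGroup E] [Module 𝕜 E] [Fintype ι] {v : ι → E}

theorem exists_pos_sum_smul_eq_zero_of_not_linearIndepOn {s : Set ι}
    (hv : ¬LinearIndepOn 𝕜 v s) :
    ∃ g : ι → 𝕜, Function.support g ⊆ s ∧ ∑ i, g i • v i = 0 ∧ ∃ i, 0 < g i := by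
  obtain ⟨g, hgs, hg, hg0⟩ : ∃ g : ι → 𝕜, Function.support g ⊆ s ∧ ∑ i, g i • v i = 0 ∧ g ≠ 0 := by
    simpa [linearIndepOn_iff_of_fintype] using hv
  obtain ⟨i, hi⟩ := Function.ne_iff.1 hg0
  rcases hi.lt_or_gt with hneg | hpos
  · exact ⟨-g, by simpa using hgs, by simp [neg_smul, hg], i, by simpa using hneg⟩
  · exact ⟨g, hgs, hg, i, hpos⟩

theorem exists_nonneg_support_ssubset_of_not_linearIndepOn {c : ι → 𝕜} (hc : 0 ≤ c)
    (hv : ¬LinearIndepOn 𝕜 v (Function.support c)) :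
    ∃ c' : ι → 𝕜, 0 ≤ c' ∧ Function.support c' ⊂ Function.support c ∧
      ∑ i, c' i • v i = ∑ i, c i • v i := by
  classical
  obtain ⟨g, hgc, hg, i₀, hi₀⟩ := exists_pos_sum_smul_eq_zero_of_not_linearIndepOn hv
  have hT : ({i | 0 < g i} : Finset ι).Nonempty := ⟨i₀, by simpa using hi₀⟩
  -- the largest `t` with `c - t • g ≥ 0`; it kills the coordinate where the ratio is attained
  set t := ({i | 0 < g i} : Finset ι).inf' hT fun i => c i / g i
  obtain ⟨j, hj, htj : t = c j / g j⟩ := exists_mem_eq_inf' hT fun i => c i / g i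
  simp only [mem_filter, mem_univ, true_and] at hj
  have ht : 0 ≤ t := le_inf' hT _ fun i hi => div_nonneg (hc i) (mem_filter.1 hi).2.le
  refine ⟨c - t • g, fun i => ?_, ?_, ?_⟩
  · rcases lt_or_ge 0 (g i) with hgi | hgi
    · have : t ≤ c i / g i := inf'_le _ (by simpa using hgi)
      simpa [mul_comm] using (le_div_iff₀ hgi).1 this
    · simpa using (mul_nonpos_of_nonneg_of_nonpos ht hgi).trans (hc i)
  · refine (Set.ssubset_iff_of_subset fun i hi => ?_).2 ⟨j, hgc hj.ne', ?_⟩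
    · by_contra hci
      have hgi : g i = 0 := by simpa using mt (@hgc i) hci
      simp_all
    · simp [htj, div_mul_cancel₀ _ hj.ne']
  · simp [sub_smul, sum_sub_distrib, mul_smul, ← smul_sum, hg]

theorem exists_nonneg_linearIndepOn_support {c : ι → 𝕜} (hc : 0 ≤ c) :
    ∃ c' : ι → 𝕜, 0 ≤ c' ∧ LinearIndepOn 𝕜 v (Function.support c') ∧
      ∑ i, c' i • v i = ∑ i, c i • v i := by
  obtain ⟨c', ⟨hc', hsum⟩, hmin⟩ := (InvImage.wf Function.support wellFounded_lt).has_min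
    {c' : ι → 𝕜 | 0 ≤ c' ∧ ∑ i, c' i • v i = ∑ i, c i • v i} ⟨c, hc, rfl⟩
  refine ⟨c', hc', by_contra fun hv => ?_, hsum⟩
  obtain ⟨c'', hc'', hlt, hsum'⟩ := exists_nonneg_support_ssubset_of_not_linearIndepOn hc' hv
  exact hmin c'' ⟨hc'', hsum'.trans hsum⟩ hlt

end Caratheodory

section GramCoeffs

variable {𝕜 ι m : Type*} [Field 𝕜] [Fintype ι] [DecidableEq ι] [Fintype m]
  {S : Set ι} {v : ι → m → 𝕜} {c : ι → 𝕜}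

/-- The Gram matrix of the rows `v i`, `i ∈ S`, padded with the identity off `S`: it is invertible
exactly when `v` is linearly independent on `S`. -/
noncomputable def paddedGram (S : Set ι) (v : ι → m → 𝕜) : Matrix ι ι 𝕜 :=
  of (S.indicator v) * (of (S.indicator v))ᵀ + diagonal (Sᶜ.indicator 1)

/-- The solution of the normal equations of least squares, with coefficients supported in `S`. -/
noncomputable def gramCoeffs (S : Set ι) (v : ι → m → 𝕜) (w : m → 𝕜) : ι → 𝕜 :=
  (w ᵥ* (of (S.indicator v))ᵀ) ᵥ* (paddedGram S v)⁻¹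

omit [DecidableEq ι] [Fintype m] in
theorem vecMul_of_indicator (hc : Function.support c ⊆ S) :
    c ᵥ* of (S.indicator v) = ∑ i, c i • v i := by
  rw [vecMul_eq_sum]
  refine sum_congr rfl fun i _ => ?_
  show c i • S.indicator v i = c i • v i
  by_cases hi : i ∈ S
  · rw [Set.indicator_of_mem hi]
  · simp [Function.notMem_support.1 (mt (@hc i) hi)]

theorem vecMul_paddedGram (hc : Function.support c ⊆ S) :
    c ᵥ* paddedGram S v = (∑ i, c i • v i) ᵥ* (of (S.indicator v))ᵀ := by
  have hdiag : c ᵥ* diagonal (Sᶜ.indicator 1) = 0 := by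
    ext i
    by_cases hi : i ∈ S
    · simp [vecMul_diagonal, hi]
    · simp [vecMul_diagonal, Function.notMem_support.1 (mt (@hc i) hi)]
  rw [paddedGram, vecMul_add, ← vecMul_vecMul, vecMul_of_indicator hc, hdiag, add_zero]

theorem isUnit_paddedGram [LinearOrder 𝕜] [IsStrictOrderedRing 𝕜] (hv : LinearIndepOn 𝕜 v S) :
    IsUnit (paddedGram S v) := by
  rw [← vecMul_injective_iff_isUnit, ← coe_vecMulLinear, ← LinearMap.ker_eq_bot,
    LinearMap.ker_eq_bot']
  intro c hc
  set u := c ᵥ* of (S.indicator v)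
  have hterm : ∀ i, 0 ≤ c i * Sᶜ.indicator 1 i * c i := fun i => by
    by_cases hi : i ∈ S <;> simp [hi, mul_self_nonneg]
  have hquad : u ⬝ᵥ u + ∑ i, c i * Sᶜ.indicator 1 i * c i = 0 := by
    change c ᵥ* paddedGram S v = 0 at hc
    rw [← zero_dotProduct c, ← hc, paddedGram, vecMul_add, add_dotProduct, ← vecMul_vecMul,
      ← dotProduct_mulVec u, mulVec_transpose]
    simp [u, dotProduct, vecMul_diagonal]
  obtain ⟨hu, hS⟩ := (add_eq_zero_iff_of_nonneg (sum_nonneg fun i _ => mul_self_nonneg (u i))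
    (sum_nonneg fun i _ => hterm i)).1 hquad
  have hcS : Function.support c ⊆ S := fun i hi => by
    by_contra hiS
    have := (sum_eq_zero_iff_of_nonneg fun i _ => hterm i).1 hS i (mem_univ i)
    simp_all
  refine linearIndepOn_iff_of_fintype.1 hv c hcS ?_
  rw [← vecMul_of_indicator hcS]
  exact dotProduct_self_eq_zero.1 hu

theorem gramCoeffs_sum_smul [LinearOrder 𝕜] [IsStrictOrderedRing 𝕜] (hv : LinearIndepOn 𝕜 v S)
    (hc : Function.support c ⊆ S) : gramCoeffs S v (∑ i, c i • v i) = c := by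
  rw [gramCoeffs, ← vecMul_paddedGram hc, vecMul_vecMul,
    mul_nonsing_inv _ ((isUnit_paddedGram hv).map detMonoidHom), vecMul_one]

theorem exists_gramCoeffs_of_mem_hull [LinearOrder 𝕜] [IsStrictOrderedRing 𝕜] {w : m → 𝕜}
    (hw : w ∈ PointedCone.hull 𝕜 (Set.range v)) :
    ∃ S : Set ι, 0 ≤ gramCoeffs S v w ∧ ∑ i, gramCoeffs S v w i • v i = w := by
  obtain ⟨c, hc, rfl⟩ := PointedCone.mem_hull_range_iff.1 hw
  obtain ⟨c', hc', hv, hsum⟩ := exists_nonneg_linearIndepOn_support (v := v) hc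
  refine ⟨Function.support c', ?_⟩
  rw [← hsum, gramCoeffs_sum_smul hv subset_rfl]
  exact ⟨hc', rfl⟩

end GramCoeffs

section Real

variable {ι m : Type*} [Fintype ι] [DecidableEq ι] [Fintype m]

omit [DecidableEq ι] in
theorem isClosed_hull_range (v : ι → m → ℝ) :
    IsClosed (PointedCone.hull ℝ (Set.range v) : Set (m → ℝ)) := by
  classical
  have hcover : (PointedCone.hull ℝ (Set.range v) : Set (m → ℝ)) =
      ⋃ S : Set ι, {w | 0 ≤ gramCoeffs S v w ∧ ∑ i, gramCoeffs S v w i • v i = w} := by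
    ext w
    rw [Set.mem_iUnion, SetLike.mem_coe]
    exact ⟨exists_gramCoeffs_of_mem_hull,
      fun ⟨S, hS, hsum⟩ => PointedCone.mem_hull_range_iff.2 ⟨_, hS, hsum⟩⟩
  rw [hcover]
  refine isClosed_iUnion_of_finite fun S => ?_
  have hcont : Continuous (gramCoeffs S v) := by unfold gramCoeffs; fun_prop
  exact (isClosed_le continuous_const hcont).inter
    (isClosed_eq (continuous_finsetSum _ fun i _ => (continuous_apply i |>.comp hcont).smul
      continuous_const) continuous_id)

theorem Measurable.gramCoeffs {Ω : Type*} [MeasurableSpace Ω] (S : Set ι)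
    {v : Ω → ι → m → ℝ} {w : Ω → m → ℝ} (hv : Measurable v) (hw : Measurable w) :
    Measurable fun ω => gramCoeffs S (v ω) (w ω) := by
  have hind : Continuous fun v : ι → m → ℝ => S.indicator v :=
    continuous_pi fun i => by
      by_cases hi : i ∈ S
      · simpa [hi] using continuous_apply i
      · simpa [hi] using continuous_const
  have hdet : Continuous fun u : ι → m → ℝ => (paddedGram S u).det := by
    unfold paddedGram; fun_prop
  have hadj : Continuous fun p : (ι → m → ℝ) × (m → ℝ) =>
      p.2 ᵥ* (of (S.indicator p.1))ᵀ ᵥ* (paddedGram S p.1).adjugate := by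
    unfold paddedGram; fun_prop
  have h1 := hdet.measurable.comp hv
  have h2 := hadj.measurable.comp (hv.prodMk hw)
  simp only [Function.comp_def] at h1 h2
  simp only [_root_.gramCoeffs, Matrix.inv_def, Ring.inverse_eq_inv', vecMul_smul]
  exact h1.inv.smul h2

end Real

theorem exists_measurable_selection_of_finite {Ω α ι : Type*} [MeasurableSpace Ω]
    [MeasurableSpace α] [Nonempty α] [Finite ι] {P : Ω → α → Prop} {g : ι → Ω → α}
    (hg : ∀ i, Measurable (g i)) (hP : ∀ i, MeasurableSet {ω | P ω (g i ω)}) :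
    ∃ f : Ω → α, Measurable f ∧ ∀ ω, (∃ i, P ω (g i ω)) → P ω (f ω) := by
  classical
  cases nonempty_fintype ι
  suffices ∀ s : Finset ι, ∃ f : Ω → α, Measurable f ∧ ∀ ω, (∃ i ∈ s, P ω (g i ω)) → P ω (f ω) by
    simpa using this univ
  intro s
  induction s using Finset.induction_on with
  | empty => exact ⟨fun _ => Classical.arbitrary α, measurable_const, by simp⟩
  | insert i s _ ih =>
    obtain ⟨f, hf, hfP⟩ := ih
    refine ⟨fun ω => if P ω (g i ω) then g i ω else f ω, (hg i).ite (hP i) hf, fun ω hω => ?_⟩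
    by_cases hi : P ω (g i ω)
    · simp [hi]
    · simp only [hi, if_false]
      obtain ⟨j, hj, hjP⟩ := hω
      exact hfP ω ⟨j, (mem_insert.1 hj).resolve_left (by rintro rfl; exact hi hjP), hjP⟩

namespace RandomNormed

section

variable {Ω : Type*} [MeasurableSpace Ω] {μ : Measure Ω} {d : ℕ} {x : Fin d → Ω → Fin d → ℝ}
  {y : Ω → Fin d → ℝ}

theorem MemL0Cone.ae_mem_hull (hy : MemL0Cone μ d x y) :
    ∀ᵐ ω ∂μ, y ω ∈ PointedCone.hull ℝ (Set.range fun i => x i ω) := by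
  obtain ⟨lam, -, hlam, hsum⟩ := hy
  filter_upwards [ae_all_iff.2 hlam, hsum] with ω hω hωsum
  exact PointedCone.mem_hull_range_iff.2 ⟨fun i => lam i ω, hω, hωsum.symm⟩

theorem memL0Cone_of_ae_mem_hull (hx : ∀ i, AEMeasurable (x i) μ) (hy : AEMeasurable y μ)
    (h : ∀ᵐ ω ∂μ, y ω ∈ PointedCone.hull ℝ (Set.range fun i => x i ω)) : MemL0Cone μ d x y := by
  obtain ⟨x', hx'm, hxx'⟩ : ∃ x' : Fin d → Ω → Fin d → ℝ, (∀ i, Measurable (x' i)) ∧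
      ∀ᵐ ω ∂μ, ∀ i, x i ω = x' i ω :=
    ⟨fun i => (hx i).mk (x i), fun i => (hx i).measurable_mk,
      ae_all_iff.2 fun i => (hx i).ae_eq_mk⟩
  obtain ⟨y', hy'm, hyy'⟩ := hy
  have hx' : Measurable fun ω i => x' i ω := measurable_pi_lambda _ hx'm
  have hcoef (S : Set (Fin d)) : Measurable fun ω => gramCoeffs S (fun i => x' i ω) (y' ω) :=
    hx'.gramCoeffs S hy'm
  have hvalid (S : Set (Fin d)) : MeasurableSet {ω | 0 ≤ gramCoeffs S (fun i => x' i ω) (y' ω) ∧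
      ∑ i, gramCoeffs S (fun i => x' i ω) (y' ω) i • x' i ω = y' ω} :=
    (measurableSet_le measurable_const (hcoef S)).inter (measurableSet_eq_fun
      (Finset.measurable_sum _ fun i _ => ((measurable_pi_apply i).comp (hcoef S)).smul
        (hx'm i)) hy'm)
  obtain ⟨lam, hlam, hgood⟩ := exists_measurable_selection_of_finite
    (P := fun ω c => 0 ≤ c ∧ ∑ i, c i • x' i ω = y' ω) hcoef hvalid
  have hlam_ae : ∀ᵐ ω ∂μ, 0 ≤ lam ω ∧ ∑ i, lam ω i • x i ω = y ω := by
    filter_upwards [h, hxx', hyy'] with ω hω hωx hωy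
    simp only [hωx, hωy] at hω ⊢
    exact hgood ω (exists_gramCoeffs_of_mem_hull hω)
  refine ⟨fun i ω => lam ω i, fun i => ((measurable_pi_apply i).comp hlam).aemeasurable,
    fun i => hlam_ae.mono fun ω hω => hω.1 i, hlam_ae.mono fun ω hω => hω.2.symm⟩

end

theorem L0_cone_closed_general
    {Ω : Type*} [MeasurableSpace Ω] (μ : Measure Ω) (d : ℕ)
    (x : Fin d → Ω → (Fin d → ℝ)) (hx : ∀ i, AEMeasurable (x i) μ)
    (y : ℕ → Ω → (Fin d → ℝ)) (z : Ω → (Fin d → ℝ)) (hz : AEMeasurable z μ)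
    (hy : ∀ n, MemL0Cone μ d x (y n))
    (hconv : TendstoInMeasure μ y atTop z) :
    MemL0Cone μ d x z := by
  refine memL0Cone_of_ae_mem_hull hx hz ?_
  obtain ⟨ns, -, hlim⟩ := hconv.exists_seq_tendsto_ae
  filter_upwards [hlim, ae_all_iff.2 fun n => (hy n).ae_mem_hull] with ω hω hmem
  exact (isClosed_hull_range _).mem_of_tendsto hω (Eventually.of_forall fun k => hmem (ns k))

/-- **A finitely generated `L⁰`-convex cone in `L⁰(F,ℝᵈ)` is closed** in the topology of
convergence in probability. -/
theorem L0_cone_closed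
    {Ω : Type*} [MeasurableSpace Ω] (μ : Measure Ω) [IsProbabilityMeasure μ] (d : ℕ)
    (x : Fin d → Ω → (Fin d → ℝ)) (hx : ∀ i, AEMeasurable (x i) μ)
    (y : ℕ → Ω → (Fin d → ℝ)) (z : Ω → (Fin d → ℝ)) (hz : AEMeasurable z μ)
    (hy : ∀ n, MemL0Cone μ d x (y n))
    (hconv : TendstoInMeasure μ y atTop z) :
    MemL0Cone μ d x z :=
  L0_cone_closed_general μ d x hx y z hz hy hconv

end RandomNormed
end

section
/- Let E be a complete random normed module with full support over ℝ. Then there exists x₀ ∈ E with ‖x₀‖ = 1, and there exists u₀ ∈ E* with u₀(x₀) = 1 and ‖u₀‖ = 1. -/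
open MeasureTheory Filter Topology ENNReal
open scoped Classical

namespace RandomNormed

variable {Ω : Type*} [MeasurableSpace Ω] {μ : Measure Ω}

/-! `Ω →ₘ[μ] ℝ` is our model of `L⁰(F)`: equivalence classes of real random variables.
We equip it with its (pointwise a.e.) commutative ring structure. -/

noncomputable instance : NatCast (Ω →ₘ[μ] ℝ) := ⟨fun n => AEEqFun.const Ω (n : ℝ)⟩
noncomputable instance : IntCast (Ω →ₘ[μ] ℝ) := ⟨fun n => AEEqFun.const Ω (n : ℝ)⟩

theorem natCast_toGerm (n : ℕ) : ((n : Ω →ₘ[μ] ℝ)).toGerm = n := by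
  show (AEEqFun.const Ω (n:ℝ)).toGerm = _
  rw [AEEqFun.const, AEEqFun.mk_toGerm]; rfl

theorem intCast_toGerm (n : ℤ) : ((n : Ω →ₘ[μ] ℝ)).toGerm = n := by
  show (AEEqFun.const Ω (n:ℝ)).toGerm = _
  rw [AEEqFun.const, AEEqFun.mk_toGerm]; rfl

noncomputable instance : CommRing (Ω →ₘ[μ] ℝ) :=
  AEEqFun.toGerm_injective.commRing AEEqFun.toGerm AEEqFun.zero_toGerm AEEqFun.one_toGerm
    AEEqFun.add_toGerm AEEqFun.mul_toGerm AEEqFun.neg_toGerm AEEqFun.sub_toGerm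
    (fun _ _ => AEEqFun.smul_toGerm _ _) (fun _ _ => AEEqFun.smul_toGerm _ _)
    AEEqFun.pow_toGerm natCast_toGerm intCast_toGerm

/-- The Ky Fan functional `ξ ↦ ∫ (|ξ| ∧ 1) dμ`: it metrizes the `(ε,λ)`-topology, i.e. the
topology of convergence in probability, on `L⁰(F) = Ω →ₘ[μ] ℝ`. -/
noncomputable def dP (μ : Measure Ω) (ξ : Ω →ₘ[μ] ℝ) : ℝ≥0∞ :=
  ∫⁻ ω, ENNReal.ofReal (min |ξ ω| 1) ∂μ

section RN

variable {E : Type*} [AddCommGroup E] [Module (Ω →ₘ[μ] ℝ) E]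

/-- `nrm` is an `L⁰`-norm on the `L⁰(F)`-module `E`. -/
def IsRNNorm (nrm : E → Ω →ₘ[μ] ℝ) : Prop :=
  (∀ x, 0 ≤ nrm x) ∧ (∀ (ξ : Ω →ₘ[μ] ℝ) (x : E), nrm (ξ • x) = |ξ| * nrm x) ∧
    (∀ x y, nrm (x + y) ≤ nrm x + nrm y) ∧ (∀ x, nrm x = 0 → x = 0)

/-- Completeness of the random normed module `(E, nrm)` with respect to the
`(ε,λ)`-topology: every Cauchy (in probability) sequence converges in probability. -/
def IsCompleteRN (nrm : E → Ω →ₘ[μ] ℝ) : Prop :=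
  ∀ x : ℕ → E,
    (∀ ε : ℝ≥0∞, 0 < ε → ∃ N, ∀ m, N ≤ m → ∀ n, N ≤ n → dP μ (nrm (x m - x n)) < ε) →
    ∃ l : E, Tendsto (fun n => dP μ (nrm (x n - l))) atTop (nhds 0)

/-- The random normed module `(E, nrm)` has full support: on no set of positive measure
do all the norms vanish. -/
def HasFullSupport (nrm : E → Ω →ₘ[μ] ℝ) : Prop :=
  ∀ A : Set Ω, MeasurableSet A → μ A ≠ 0 → ∃ x : E, ¬ (∀ᵐ ω ∂μ, ω ∈ A → nrm x ω = 0)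

/-- An `L⁰`-linear functional is a.s. bounded (equivalently, continuous), i.e. a member of
the random conjugate space `E*`. -/
def IsBoundedLF (nrm : E → Ω →ₘ[μ] ℝ) (u : E →ₗ[Ω →ₘ[μ] ℝ] (Ω →ₘ[μ] ℝ)) : Prop :=
  ∃ ξ : Ω →ₘ[μ] ℝ, 0 ≤ ξ ∧ ∀ x, |u x| ≤ ξ * nrm x

/-- `s` is the supremum in `L̄⁰(F)` (with the a.e. order) of the set `S` of
(representatives of) extended-real-valued random variables. -/
def IsAESup (μ : Measure Ω) (S : Set (Ω → EReal)) (s : Ω → EReal) : Prop :=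
  (∀ g ∈ S, ∀ᵐ ω ∂μ, g ω ≤ s ω) ∧
    ∀ b : Ω → EReal, AEMeasurable b μ → (∀ g ∈ S, ∀ᵐ ω ∂μ, g ω ≤ b ω) →
      ∀ᵐ ω ∂μ, s ω ≤ b ω

/-- `f : E → L̄⁰(F)` (in representative form) is a proper lower semicontinuous `L⁰`-convex
function: a.e.-measurable values, nowhere `-∞`, somewhere finite, `L⁰`-convex, and with
an epigraph that is (sequentially) closed in the `(ε,λ)`-topology of `E × L⁰(F)`. -/
def IsCvxFn (nrm : E → Ω →ₘ[μ] ℝ) (f : E → Ω → EReal) : Prop :=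
  (∀ x, AEMeasurable (f x) μ) ∧
  (∀ x, ∀ᵐ ω ∂μ, ⊥ < f x ω) ∧
  (∃ x, ∀ᵐ ω ∂μ, f x ω < ⊤) ∧
  (∀ ξ : Ω →ₘ[μ] ℝ, 0 ≤ ξ → ξ ≤ 1 → ∀ x y : E,
    ∀ᵐ ω ∂μ, f (ξ • x + (1 - ξ) • y) ω ≤
      ((ξ ω : ℝ) : EReal) * f x ω + (((1 - ξ : Ω →ₘ[μ] ℝ) ω : ℝ) : EReal) * f y ω) ∧
  (∀ (x : ℕ → E) (r : ℕ → Ω →ₘ[μ] ℝ) (x₀ : E) (r₀ : Ω →ₘ[μ] ℝ),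
    (∀ n, ∀ᵐ ω ∂μ, f (x n) ω ≤ ((r n ω : ℝ) : EReal)) →
    Tendsto (fun n => dP μ (nrm (x n - x₀))) atTop (nhds 0) →
    Tendsto (fun n => dP μ (r n - r₀)) atTop (nhds 0) →
    ∀ᵐ ω ∂μ, f x₀ ω ≤ ((r₀ ω : ℝ) : EReal))

/-- The class `𝒞(E)` of proper lower semicontinuous `L⁰`-convex functions on `E`. -/
def CvxFn (nrm : E → Ω →ₘ[μ] ℝ) := {f : E → Ω → EReal // IsCvxFn nrm f}

/-- The pointwise a.e. order on functions `E → L̄⁰(F)`. -/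
def CleFn (μ : Measure Ω) (f g : E → Ω → EReal) : Prop := ∀ x : E, ∀ᵐ ω ∂μ, f x ω ≤ g x ω

/-- Pointwise a.e. equality of functions `E → L̄⁰(F)` (i.e. equality in `L̄⁰`). -/
def CeqFn (μ : Measure Ω) (f g : E → Ω → EReal) : Prop := ∀ x : E, ∀ᵐ ω ∂μ, f x ω = g x ω

/-- `T` is a stable operator on `𝒞(E)`: `T(Ĩ_A f + Ĩ_{A^c} g) = Ĩ_A T(f) + Ĩ_{A^c} T(g)`. -/
def IsStableOp (nrm : E → Ω →ₘ[μ] ℝ) (T : CvxFn nrm → CvxFn nrm) : Prop :=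
  ∀ A : Set Ω, MeasurableSet A → ∀ f g h : CvxFn nrm,
    (∀ x : E, ∀ᵐ ω ∂μ, h.1 x ω = if ω ∈ A then f.1 x ω else g.1 x ω) →
    (∀ x : E, ∀ᵐ ω ∂μ, (T h).1 x ω = if ω ∈ A then (T f).1 x ω else (T g).1 x ω)

/-- `T : 𝒞(E) → 𝒞(E)` is fully order preserving: `f ≤ g ↔ T f ≤ T g`, and `T` is onto
(up to equality in `L̄⁰`, i.e. pointwise a.e. equality). -/
def IsFullyOrderPreserving (nrm : E → Ω →ₘ[μ] ℝ)
    (T : CvxFn nrm → CvxFn nrm) : Prop :=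
  (∀ f g : CvxFn nrm, CleFn μ f.1 g.1 ↔ CleFn μ (T f).1 (T g).1) ∧
    ∀ g : CvxFn nrm, ∃ f : CvxFn nrm, CeqFn μ (T f).1 g.1

end RN

/-!
An element of norm one is found by exhaustion. The measurable sets `A` for which `1_A` is the
norm of some element are closed under finite unions (glue the two elements along `A` and its
complement) and, by completeness, under increasing countable unions, so one of them, `S`, has
maximal measure; by full support every non-null set contains a non-null such set, hence `S` is
conull.

The functional comes from the Hahn–Banach theorem over `L⁰`. By Zorn's lemma it suffices to
extend a dominated functional `f` to one more vector `x`. The value `α` at `x` is the supremum in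
`L⁰` of the upward-directed family `-f z - ‖z + x‖`; such suprema exist because the bounded,
strictly monotone functional `a ↦ ∫ arctan a` can be maximized along a monotone sequence. The
bound `|f z + ξ α| ≤ ‖z + ξ x‖` for an arbitrary scalar `ξ` is checked separately on `{ξ ≠ 0}`,
where `ξ` is invertible, and on `{ξ = 0}`.
-/

instance : IsOrderedAddMonoid (Ω →ₘ[μ] ℝ) where
  add_le_add_left a b h c := by
    rw [← AEEqFun.coeFn_le] at h ⊢
    filter_upwards [h, AEEqFun.coeFn_add a c, AEEqFun.coeFn_add b c] with ω h h1 h2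
    simp only [h1, h2, Pi.add_apply]
    linarith

instance : ZeroLEOneClass (Ω →ₘ[μ] ℝ) where
  zero_le_one := by
    rw [← AEEqFun.coeFn_le]
    filter_upwards [AEEqFun.coeFn_one (β := ℝ) (μ := μ), AEEqFun.coeFn_zero (β := ℝ) (μ := μ)]
      with ω h1 h0
    simp [h1, h0]

instance : IsOrderedRing (Ω →ₘ[μ] ℝ) := by
  refine .of_mul_nonneg fun a b ha hb => ?_
  rw [← AEEqFun.coeFn_le] at ha hb ⊢
  filter_upwards [ha, hb, AEEqFun.coeFn_mul a b, AEEqFun.coeFn_zero (β := ℝ) (μ := μ)]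
    with ω ha hb hab h0
  simp only [hab, h0, Pi.mul_apply, Pi.zero_apply] at ha hb ⊢
  exact mul_nonneg ha hb

theorem _root_.eq_zero_of_abs_nonpos {α : Type*} [Lattice α] [AddCommGroup α]
    [IsOrderedAddMonoid α] {a : α} (h : |a| ≤ 0) : a = 0 :=
  le_antisymm (abs_le'.mp h).1 (neg_nonpos.mp (abs_le'.mp h).2)

theorem L0.abs_mul (a b : Ω →ₘ[μ] ℝ) : |a * b| = |a| * |b| := by
  refine AEEqFun.ext ?_
  filter_upwards [AEEqFun.coeFn_abs (a * b), AEEqFun.coeFn_mul a b, AEEqFun.coeFn_mul |a| |b|,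
    AEEqFun.coeFn_abs a, AEEqFun.coeFn_abs b] with ω h1 h2 h3 h4 h5
  rw [h1, h3]
  simp only [Pi.mul_apply, h2, h4, h5, _root_.abs_mul]

theorem L0.nonneg_of_isIdempotentElem {e : Ω →ₘ[μ] ℝ} (he : IsIdempotentElem e) : 0 ≤ e := by
  rw [← he.eq, ← AEEqFun.coeFn_le]
  filter_upwards [AEEqFun.coeFn_mul e e, AEEqFun.coeFn_zero (β := ℝ) (μ := μ)] with ω h h0
  simpa [h, h0] using mul_self_nonneg (e ω)

theorem exists_isIdempotentElem_mul_add_eq_sup (a b : Ω →ₘ[μ] ℝ) :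
    ∃ e, IsIdempotentElem e ∧ e * a + (1 - e) * b = a ⊔ b := by
  have hmeas : Measurable fun ω => if b ω ≤ a ω then (1 : ℝ) else 0 :=
    Measurable.ite (measurableSet_le b.measurable a.measurable) measurable_const measurable_const
  obtain ⟨e, he⟩ : ∃ e : Ω →ₘ[μ] ℝ, ⇑e =ᵐ[μ] fun ω => if b ω ≤ a ω then (1 : ℝ) else 0 :=
    ⟨_, AEEqFun.coeFn_mk _ hmeas.aestronglyMeasurable⟩
  refine ⟨e, AEEqFun.ext ?_, AEEqFun.ext ?_⟩
  · filter_upwards [he, AEEqFun.coeFn_mul e e] with ω h h'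
    rw [h', Pi.mul_apply, h]
    split_ifs <;> simp
  · filter_upwards [he, AEEqFun.coeFn_add (e * a) ((1 - e) * b), AEEqFun.coeFn_mul e a,
      AEEqFun.coeFn_mul (1 - e) b, AEEqFun.coeFn_sub 1 e, AEEqFun.coeFn_one (β := ℝ) (μ := μ),
      AEEqFun.coeFn_sup a b] with ω h h1 h2 h3 h4 h5 h6
    simp only [h1, h2, h3, h4, h5, h6, Pi.add_apply, Pi.mul_apply, Pi.sub_apply, Pi.one_apply, h]
    split_ifs with hω
    · simp [hω]
    · simp [(not_le.mp hω).le]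

theorem exists_isIdempotentElem_mul_eq (ξ : Ω →ₘ[μ] ℝ) :
    ∃ e η, IsIdempotentElem e ∧ ξ * η = e ∧ e * ξ = ξ := by
  obtain ⟨η, hη⟩ : ∃ η : Ω →ₘ[μ] ℝ, ⇑η =ᵐ[μ] fun ω => (ξ ω)⁻¹ :=
    ⟨_, AEEqFun.coeFn_mk _ ξ.measurable.inv.aestronglyMeasurable⟩
  refine ⟨ξ * η, η, AEEqFun.ext ?_, rfl, AEEqFun.ext ?_⟩
  · filter_upwards [hη, AEEqFun.coeFn_mul ξ η, AEEqFun.coeFn_mul (ξ * η) (ξ * η)]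
      with ω h h1 h2
    rw [h2, Pi.mul_apply, h1, Pi.mul_apply, h]
    by_cases hω : ξ ω = 0 <;> simp [hω]
  · filter_upwards [hη, AEEqFun.coeFn_mul ξ η, AEEqFun.coeFn_mul (ξ * η) ξ] with ω h h1 h2
    rw [h2, Pi.mul_apply, h1, Pi.mul_apply, h]
    by_cases hω : ξ ω = 0 <;> simp [hω]

/-- The class of `1_A` in `L⁰` (junk value `0` when `A` is not measurable). -/
noncomputable def indicatorL0 (μ : Measure Ω) (A : Set Ω) : Ω →ₘ[μ] ℝ :=
  if hA : MeasurableSet A then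
    AEEqFun.mk (A.indicator 1) (measurable_one.indicator hA).aestronglyMeasurable
  else 0

theorem coeFn_indicatorL0 {A : Set Ω} (hA : MeasurableSet A) :
    ⇑(indicatorL0 μ A) =ᵐ[μ] A.indicator 1 := by
  rw [indicatorL0, dif_pos hA]
  exact AEEqFun.coeFn_mk _ _

theorem indicatorL0_inter {A B : Set Ω} (hA : MeasurableSet A) (hB : MeasurableSet B) :
    indicatorL0 μ (A ∩ B) = indicatorL0 μ A * indicatorL0 μ B := by
  refine AEEqFun.ext ?_
  filter_upwards [coeFn_indicatorL0 (μ := μ) (hA.inter hB), coeFn_indicatorL0 (μ := μ) hA,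
    coeFn_indicatorL0 (μ := μ) hB, AEEqFun.coeFn_mul (indicatorL0 μ A) (indicatorL0 μ B)]
    with ω h h1 h2 h12
  rw [h, h12, Pi.mul_apply, h1, h2, Set.inter_indicator_one]
  rfl

theorem indicatorL0_union {A B : Set Ω} (hA : MeasurableSet A) (hB : MeasurableSet B)
    (hAB : Disjoint A B) : indicatorL0 μ (A ∪ B) = indicatorL0 μ A + indicatorL0 μ B := by
  refine AEEqFun.ext ?_
  filter_upwards [coeFn_indicatorL0 (μ := μ) (hA.union hB), coeFn_indicatorL0 (μ := μ) hA,
    coeFn_indicatorL0 (μ := μ) hB, AEEqFun.coeFn_add (indicatorL0 μ A) (indicatorL0 μ B)]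
    with ω h h1 h2 h12
  rw [h, h12, Pi.add_apply, h1, h2, Set.indicator_union_of_disjoint hAB]

@[simp]
theorem indicatorL0_empty : indicatorL0 μ (∅ : Set Ω) = 0 := by
  refine AEEqFun.ext ?_
  filter_upwards [coeFn_indicatorL0 (μ := μ) MeasurableSet.empty,
    AEEqFun.coeFn_zero (β := ℝ) (μ := μ)] with ω h h0
  simp [h, h0]

theorem indicatorL0_eq_one {A : Set Ω} (hA : MeasurableSet A) (h : μ Aᶜ = 0) :
    indicatorL0 μ A = 1 := by
  refine AEEqFun.ext ?_
  filter_upwards [coeFn_indicatorL0 (μ := μ) hA, AEEqFun.coeFn_one (β := ℝ) (μ := μ),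
    measure_eq_zero_iff_ae_notMem.mp h] with ω h h1 hω
  rw [h, h1, Set.indicator_of_mem (by simpa using hω)]

theorem isIdempotentElem_indicatorL0 {A : Set Ω} (hA : MeasurableSet A) :
    IsIdempotentElem (indicatorL0 μ A) := by
  rw [IsIdempotentElem, ← indicatorL0_inter hA hA, Set.inter_self]

theorem one_sub_indicatorL0 {A : Set Ω} (hA : MeasurableSet A) :
    1 - indicatorL0 μ A = indicatorL0 μ Aᶜ := by
  rw [← indicatorL0_eq_one (μ := μ) MeasurableSet.univ (by simp), ← Set.union_compl_self A,
    indicatorL0_union hA hA.compl disjoint_compl_right, add_sub_cancel_left]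

theorem dP_zero : dP μ 0 = 0 := by
  refine (lintegral_congr_ae ?_).trans lintegral_zero
  filter_upwards [AEEqFun.coeFn_zero (β := ℝ) (μ := μ)] with ω h0
  simp [h0]

theorem eq_zero_of_dP_eq_zero {ξ : Ω →ₘ[μ] ℝ} (h : dP μ ξ = 0) : ξ = 0 := by
  have hmeas : AEMeasurable (fun ω => ENNReal.ofReal (min |ξ ω| 1)) μ := by fun_prop
  rw [dP, lintegral_eq_zero_iff' hmeas] at h
  refine AEEqFun.ext ?_
  filter_upwards [h, AEEqFun.coeFn_zero (β := ℝ) (μ := μ)] with ω hω h0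
  have : min |ξ ω| 1 ≤ 0 := ENNReal.ofReal_eq_zero.mp hω
  rw [h0]
  rcases min_le_iff.mp this with h | h
  · exact abs_nonpos_iff.mp h
  · norm_num at h

theorem dP_le_dP_add_measure {ξ η : Ω →ₘ[μ] ℝ} (hη : 0 ≤ η) {A : Set Ω} (hA : MeasurableSet A)
    (h : |ξ| ≤ η + indicatorL0 μ A) : dP μ ξ ≤ dP μ η + μ A := by
  have hpt : ∀ᵐ ω ∂μ, ENNReal.ofReal (min |ξ ω| 1) ≤
      ENNReal.ofReal (min |η ω| 1) + A.indicator 1 ω := by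
    filter_upwards [AEEqFun.coeFn_le.mpr h, AEEqFun.coeFn_le.mpr hη, AEEqFun.coeFn_abs ξ,
      AEEqFun.coeFn_add η (indicatorL0 μ A), coeFn_indicatorL0 (μ := μ) hA,
      AEEqFun.coeFn_zero (β := ℝ) (μ := μ)] with ω h hη hξ hsum hA h0
    simp only [hξ, hsum, Pi.add_apply, hA, h0, Pi.zero_apply] at h hη
    by_cases hω : ω ∈ A
    · simp [hω]
    · rw [Set.indicator_of_notMem hω, add_zero] at h ⊢
      rw [abs_of_nonneg hη]
      exact ENNReal.ofReal_le_ofReal (min_le_min_right 1 h)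
  calc dP μ ξ ≤ ∫⁻ ω, ENNReal.ofReal (min |η ω| 1) + A.indicator 1 ω ∂μ := lintegral_mono_ae hpt
    _ = dP μ η + μ A := by
      rw [lintegral_add_right _ (measurable_one.indicator hA), lintegral_indicator_one hA, dP]

theorem _root_.DirectedOn.exists_monotone_ge {α : Type*} [Preorder α] {S : Set α}
    (hS : DirectedOn (· ≤ ·) S) {a : ℕ → α} (ha : ∀ n, a n ∈ S) :
    ∃ b : ℕ → α, Monotone b ∧ (∀ n, b n ∈ S) ∧ ∀ n, a n ≤ b n := by
  choose c hcS hc₁ hc₂ using hS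
  let b : ℕ → S := fun n =>
    Nat.rec ⟨a 0, ha 0⟩ (fun k bk => ⟨c bk bk.2 (a (k + 1)) (ha _), hcS ..⟩) n
  refine ⟨fun n => (b n).1, monotone_nat_of_le_succ fun n => hc₁ .., fun n => (b n).2, ?_⟩
  rintro (_ | n)
  exacts [le_rfl, hc₂ ..]

noncomputable def arctanIntegral (μ : Measure Ω) (a : Ω →ₘ[μ] ℝ) : ℝ :=
  ∫ ω, Real.arctan (a ω) ∂μ

theorem norm_arctan_le (x : ℝ) : ‖Real.arctan x‖ ≤ Real.pi / 2 := by
  rw [Real.norm_eq_abs, abs_le]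
  exact ⟨(Real.neg_pi_div_two_lt_arctan x).le, (Real.arctan_lt_pi_div_two x).le⟩

theorem integrable_arctan_comp [IsFiniteMeasure μ] {f : Ω → ℝ} (hf : AEStronglyMeasurable f μ) :
    Integrable (fun ω => Real.arctan (f ω)) μ :=
  (integrable_const (Real.pi / 2)).mono' (Real.continuous_arctan.comp_aestronglyMeasurable hf)
    (ae_of_all _ fun ω => norm_arctan_le (f ω))

theorem arctanIntegral_mono [IsFiniteMeasure μ] {a b : Ω →ₘ[μ] ℝ} (hab : a ≤ b) :
    arctanIntegral μ a ≤ arctanIntegral μ b := by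
  refine integral_mono_ae (integrable_arctan_comp a.aestronglyMeasurable)
    (integrable_arctan_comp b.aestronglyMeasurable) ?_
  filter_upwards [AEEqFun.coeFn_le.mpr hab] with ω h
  exact Real.arctan_strictMono.monotone h

theorem eq_of_le_of_arctanIntegral_le [IsFiniteMeasure μ] {a b : Ω →ₘ[μ] ℝ} (hab : a ≤ b)
    (h : arctanIntegral μ b ≤ arctanIntegral μ a) : a = b := by
  have ha := integrable_arctan_comp (μ := μ) a.aestronglyMeasurable
  have hb := integrable_arctan_comp (μ := μ) b.aestronglyMeasurable
  have hnonneg : 0 ≤ᵐ[μ] fun ω => Real.arctan (b ω) - Real.arctan (a ω) := by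
    filter_upwards [AEEqFun.coeFn_le.mpr hab] with ω h
    exact sub_nonneg.mpr (Real.arctan_strictMono.monotone h)
  have hzero : ∫ ω, Real.arctan (b ω) - Real.arctan (a ω) ∂μ = 0 := by
    rw [integral_sub hb ha]
    exact le_antisymm (sub_nonpos.mpr h) (sub_nonneg.mpr (arctanIntegral_mono hab))
  refine AEEqFun.ext ?_
  filter_upwards [(integral_eq_zero_iff_of_nonneg_ae hnonneg (hb.sub ha)).mp hzero] with ω h
  exact Real.arctan_injective (sub_eq_zero.mp h).symm

theorem tendsto_arctanIntegral [IsFiniteMeasure μ] {b : ℕ → Ω →ₘ[μ] ℝ} {s : Ω →ₘ[μ] ℝ}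
    (h : ∀ᵐ ω ∂μ, Tendsto (fun n => b n ω) atTop (𝓝 (s ω))) :
    Tendsto (fun n => arctanIntegral μ (b n)) atTop (𝓝 (arctanIntegral μ s)) := by
  refine tendsto_integral_of_dominated_convergence (fun _ => Real.pi / 2)
    (fun n => Real.continuous_arctan.comp_aestronglyMeasurable (b n).aestronglyMeasurable)
    (integrable_const _) (fun n => ae_of_all _ fun ω => norm_arctan_le _) ?_
  filter_upwards [h] with ω hω
  exact (Real.continuous_arctan.tendsto _).comp hω

theorem exists_isLUB_range_of_monotone [IsFiniteMeasure μ] {b : ℕ → Ω →ₘ[μ] ℝ}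
    (hb : Monotone b) (hbdd : BddAbove (Set.range b)) :
    ∃ s, IsLUB (Set.range b) s ∧
      Tendsto (fun n => arctanIntegral μ (b n)) atTop (𝓝 (arctanIntegral μ s)) := by
  obtain ⟨β, hβ⟩ := hbdd
  have hmono : ∀ᵐ ω ∂μ, Monotone fun n => b n ω := by
    filter_upwards [ae_all_iff.mpr fun n : ℕ => AEEqFun.coeFn_le.mpr (hb n.le_succ)] with ω h
    exact monotone_nat_of_le_succ h
  have hbdd : ∀ᵐ ω ∂μ, BddAbove (Set.range fun n => b n ω) := by
    filter_upwards [ae_all_iff.mpr fun n => AEEqFun.coeFn_le.mpr (hβ ⟨n, rfl⟩)] with ω h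
    exact ⟨β ω, Set.forall_mem_range.mpr h⟩
  have hmeas : AEMeasurable (fun ω => ⨆ n, b n ω) μ :=
    AEMeasurable.iSup fun n => (b n).aestronglyMeasurable.aemeasurable
  set s : Ω →ₘ[μ] ℝ := AEEqFun.mk _ hmeas.aestronglyMeasurable
  have hs : ⇑s =ᵐ[μ] fun ω => ⨆ n, b n ω := AEEqFun.coeFn_mk _ _
  refine ⟨s, ⟨?_, fun c hc => ?_⟩, tendsto_arctanIntegral ?_⟩
  · rintro _ ⟨n, rfl⟩
    rw [← AEEqFun.coeFn_le]
    filter_upwards [hs, hbdd] with ω hω hbω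
    exact hω ▸ le_ciSup hbω n
  · rw [← AEEqFun.coeFn_le]
    filter_upwards [hs, ae_all_iff.mpr fun n => AEEqFun.coeFn_le.mpr (hc ⟨n, rfl⟩)] with ω hω h
    exact hω ▸ ciSup_le h
  · filter_upwards [hs, hmono, hbdd] with ω hω hmω hbω
    exact hω ▸ tendsto_atTop_ciSup hmω hbω

theorem exists_isLUB_of_directedOn [IsFiniteMeasure μ] {S : Set (Ω →ₘ[μ] ℝ)} (hne : S.Nonempty)
    (hdir : DirectedOn (· ≤ ·) S) (hbdd : BddAbove S) : ∃ s, IsLUB S s := by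
  obtain ⟨β, hβ⟩ := hbdd
  set t := sSup (arctanIntegral μ '' S)
  have hI_le : ∀ a ∈ S, arctanIntegral μ a ≤ t := fun a ha =>
    le_csSup ⟨_, Set.forall_mem_image.mpr fun a ha => arctanIntegral_mono (hβ ha)⟩ ⟨a, ha, rfl⟩
  obtain ⟨u, -, hu, huS⟩ := exists_seq_tendsto_sSup (hne.image _)
    ⟨_, Set.forall_mem_image.mpr fun a ha => arctanIntegral_mono (hβ ha)⟩
  choose a haS hau using huS
  obtain ⟨b, hb, hbS, hab⟩ := hdir.exists_monotone_ge haS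
  obtain ⟨s, hs, hbs⟩ := exists_isLUB_range_of_monotone hb
    ⟨β, Set.range_subset_iff.mpr (hβ <| hbS ·)⟩
  have hst : arctanIntegral μ s = t := by
    refine tendsto_nhds_unique hbs (tendsto_of_tendsto_of_tendsto_of_le_of_le hu tendsto_const_nhds
      (fun n => ?_) (fun n => hI_le _ (hbS n)))
    rw [← hau n]
    exact arctanIntegral_mono (hab n)
  refine ⟨s, fun x hx => ?_, fun c hc => hs.2 (Set.forall_mem_range.mpr (hc <| hbS ·))⟩
  -- a monotone sequence in `S` above both `b` and `x` has the same supremum `s`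
  choose c hcS hbc hxc using fun n => hdir (b n) (hbS n) x hx
  obtain ⟨b', hb', hb'S, hcb'⟩ := hdir.exists_monotone_ge hcS
  obtain ⟨s', hs', hbs'⟩ := exists_isLUB_range_of_monotone hb'
    ⟨β, Set.range_subset_iff.mpr (hβ <| hb'S ·)⟩
  have hss' : s ≤ s' := hs.2 (Set.forall_mem_range.mpr fun n =>
    ((hbc n).trans (hcb' n)).trans (hs'.1 ⟨n, rfl⟩))
  have hs't : arctanIntegral μ s' ≤ arctanIntegral μ s :=
    hst ▸ le_of_tendsto' hbs' fun n => hI_le _ (hb'S n)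
  rw [eq_of_le_of_arctanIntegral_le hss' hs't]
  exact ((hxc 0).trans (hcb' 0)).trans (hs'.1 ⟨0, rfl⟩)

theorem exists_forall_measure_le {α : Type*} [MeasurableSpace α] (μ : Measure α)
    {p : Set α → Prop} (hempty : p ∅) (hunion : ∀ A B, p A → p B → p (A ∪ B))
    (hiUnion : ∀ D : ℕ → Set α, Monotone D → (∀ n, p (D n)) → p (⋃ n, D n)) :
    ∃ S, p S ∧ ∀ A, p A → μ A ≤ μ S := by
  have hne : (μ '' {A | p A}).Nonempty := ⟨μ ∅, ∅, hempty, rfl⟩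
  obtain ⟨u, -, hu, hup⟩ := exists_seq_tendsto_sSup hne (OrderTop.bddAbove _)
  choose A hA hAu using hup
  have hacc : ∀ n, p (Set.accumulate A n) := by
    intro n
    induction n with
    | zero => simpa [Set.accumulate_zero_nat] using hA 0
    | succ n ih => simpa [Set.accumulate_succ] using hunion _ _ ih (hA (n + 1))
  refine ⟨_, hiUnion _ Set.monotone_accumulate hacc, fun B hB => ?_⟩
  refine (le_sSup (Set.mem_image_of_mem μ hB)).trans (le_of_tendsto' hu fun n => ?_)
  rw [← hAu n]
  exact measure_mono (Set.subset_accumulate.trans (Set.subset_iUnion _ n))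

theorem tendsto_measure_iUnion_sdiff [IsFiniteMeasure μ] {D : ℕ → Set Ω} (hD : Monotone D)
    (hDm : ∀ n, MeasurableSet (D n)) :
    Tendsto (fun n => μ ((⋃ k, D k) \ D n)) atTop (𝓝 0) := by
  have h := tendsto_measure_iInter_atTop (μ := μ)
    (fun n => ((MeasurableSet.iUnion hDm).diff (hDm n)).nullMeasurableSet)
    (fun m n hmn => Set.sdiff_subset_sdiff_right (hD hmn)) ⟨0, measure_ne_top μ _⟩
  have h0 : ⋂ n, (⋃ k, D k) \ D n = ∅ := by
    refine Set.eq_empty_of_forall_notMem fun ω hω => ?_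
    obtain ⟨k, hk⟩ := Set.mem_iUnion.mp (Set.mem_iInter.mp hω 0).1
    exact (Set.mem_iInter.mp hω k).2 hk
  rwa [h0, measure_empty] at h

section RandomNormedModule

variable {E : Type*} [AddCommGroup E] [Module (Ω →ₘ[μ] ℝ) E] {nrm : E → Ω →ₘ[μ] ℝ}

theorem IsRNNorm.map_zero (hnrm : IsRNNorm nrm) : nrm 0 = 0 := by
  simpa using hnrm.2.1 0 0

theorem IsRNNorm.map_neg (hnrm : IsRNNorm nrm) (x : E) : nrm (-x) = nrm x := by
  simpa [abs_of_nonneg (zero_le_one' (Ω →ₘ[μ] ℝ))] using hnrm.2.1 (-1) x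

theorem IsRNNorm.map_sub_comm (hnrm : IsRNNorm nrm) (x y : E) : nrm (x - y) = nrm (y - x) := by
  rw [← neg_sub, hnrm.map_neg]

theorem IsRNNorm.abs_sub_le (hnrm : IsRNNorm nrm) (x y : E) : |nrm x - nrm y| ≤ nrm (x - y) := by
  have key : ∀ x y : E, nrm x - nrm y ≤ nrm (x - y) := fun x y =>
    sub_le_iff_le_add.mpr (by simpa using hnrm.2.2.1 (x - y) y)
  refine abs_le'.mpr ⟨key x y, ?_⟩
  rw [neg_sub, hnrm.map_sub_comm]
  exact key y x

theorem IsRNNorm.map_smul_of_isIdempotentElem (hnrm : IsRNNorm nrm) {e : Ω →ₘ[μ] ℝ}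
    (he : IsIdempotentElem e) (x : E) : nrm (e • x) = e * nrm x := by
  rw [hnrm.2.1, abs_of_nonneg (L0.nonneg_of_isIdempotentElem he)]

theorem IsRNNorm.map_eq_add_of_isIdempotentElem (hnrm : IsRNNorm nrm) {e : Ω →ₘ[μ] ℝ}
    (he : IsIdempotentElem e) (x : E) : nrm x = nrm (e • x) + nrm ((1 - e) • x) := by
  rw [hnrm.map_smul_of_isIdempotentElem he, hnrm.map_smul_of_isIdempotentElem he.one_sub]
  ring

theorem IsRNNorm.map_smul_add_one_sub_smul (hnrm : IsRNNorm nrm) {e : Ω →ₘ[μ] ℝ}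
    (he : IsIdempotentElem e) (u v : E) :
    nrm (e • u + (1 - e) • v) = e * nrm u + (1 - e) * nrm v := by
  rw [hnrm.map_eq_add_of_isIdempotentElem he, smul_add, smul_add, smul_smul, smul_smul,
    smul_smul, smul_smul, he.eq, he.mul_one_sub_self, he.one_sub_mul_self, he.one_sub.eq,
    zero_smul, zero_smul, add_zero, zero_add, hnrm.map_smul_of_isIdempotentElem he,
    hnrm.map_smul_of_isIdempotentElem he.one_sub]

theorem IsRNNorm.indicatorL0_smul_eq_self (hnrm : IsRNNorm nrm) {A : Set Ω}
    (hA : MeasurableSet A) {y : E} (hy : nrm y = indicatorL0 μ A) : indicatorL0 μ A • y = y := by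
  refine (sub_eq_zero.mp (hnrm.2.2.2 _ ?_)).symm
  rw [← one_smul (Ω →ₘ[μ] ℝ) y, smul_smul, mul_one, ← sub_smul, hnrm.map_smul_of_isIdempotentElem
    (isIdempotentElem_indicatorL0 hA).one_sub, hy, one_sub_indicatorL0 hA,
    ← indicatorL0_inter hA.compl hA, Set.compl_inter_self, indicatorL0_empty]

theorem IsRNNorm.map_add_indicatorL0_smul (hnrm : IsRNNorm nrm) {A B : Set Ω}
    (hA : MeasurableSet A) (hB : MeasurableSet B) {a b : E} (ha : nrm a = indicatorL0 μ A)
    (hb : nrm b = indicatorL0 μ B) :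
    nrm (a + indicatorL0 μ (B \ A) • b) = indicatorL0 μ (A ∪ B) := by
  have he := isIdempotentElem_indicatorL0 (μ := μ) hA
  have h_on : indicatorL0 μ A • (a + indicatorL0 μ (B \ A) • b) = a := by
    rw [smul_add, hnrm.indicatorL0_smul_eq_self hA ha, smul_smul,
      ← indicatorL0_inter hA (hB.diff hA), Set.inter_sdiff_self, indicatorL0_empty, zero_smul,
      add_zero]
  have h_off : (1 - indicatorL0 μ A) • (a + indicatorL0 μ (B \ A) • b) =
      indicatorL0 μ (B \ A) • b := by
    rw [smul_add, ← hnrm.indicatorL0_smul_eq_self hA ha, smul_smul, he.one_sub_mul_self,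
      zero_smul, zero_add, smul_smul, one_sub_indicatorL0 hA,
      ← indicatorL0_inter hA.compl (hB.diff hA),
      Set.inter_eq_right.mpr fun ω hω => hω.2]
  rw [hnrm.map_eq_add_of_isIdempotentElem he, h_on, h_off, ha,
    hnrm.map_smul_of_isIdempotentElem (isIdempotentElem_indicatorL0 (hB.diff hA)), hb,
    ← indicatorL0_inter (hB.diff hA) hB, Set.inter_eq_left.mpr Set.sdiff_subset,
    ← indicatorL0_union hA (hB.diff hA) Set.disjoint_sdiff_right, Set.union_sdiff_self]

def IndicatorIsNorm (nrm : E → Ω →ₘ[μ] ℝ) (A : Set Ω) : Prop :=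
  MeasurableSet A ∧ ∃ y : E, nrm y = indicatorL0 μ A

theorem indicatorIsNorm_empty (hnrm : IsRNNorm nrm) : IndicatorIsNorm nrm (∅ : Set Ω) :=
  ⟨.empty, 0, by rw [hnrm.map_zero, indicatorL0_empty]⟩

theorem IndicatorIsNorm.union (hnrm : IsRNNorm nrm) {A B : Set Ω} (hA : IndicatorIsNorm nrm A)
    (hB : IndicatorIsNorm nrm B) : IndicatorIsNorm nrm (A ∪ B) :=
  let ⟨hAm, _, ha⟩ := hA
  let ⟨hBm, _, hb⟩ := hB
  ⟨hAm.union hBm, _, hnrm.map_add_indicatorL0_smul hAm hBm ha hb⟩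

theorem exists_subset_indicatorIsNorm (hnrm : IsRNNorm nrm) (hfull : HasFullSupport nrm)
    {A : Set Ω} (hA : MeasurableSet A) (hμA : μ A ≠ 0) :
    ∃ B ⊆ A, IndicatorIsNorm nrm B ∧ μ B ≠ 0 := by
  obtain ⟨x, hx⟩ := hfull A hA hμA
  have hg := (nrm x).measurable
  set B := A ∩ {ω | nrm x ω ≠ 0}
  have hB : MeasurableSet B := hA.inter (hg (measurableSet_singleton 0)).compl
  refine ⟨B, Set.inter_subset_left, ⟨hB, ?_⟩, fun hμB => hx ?_⟩
  · have hξ : Measurable (B.indicator fun ω => (nrm x ω)⁻¹) := hg.inv.indicator hB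
    set ξ : Ω →ₘ[μ] ℝ := AEEqFun.mk _ hξ.aestronglyMeasurable
    refine ⟨ξ • x, AEEqFun.ext ?_⟩
    rw [hnrm.2.1]
    filter_upwards [AEEqFun.coeFn_mul |ξ| (nrm x), AEEqFun.coeFn_abs ξ,
      AEEqFun.coeFn_mk _ hξ.aestronglyMeasurable, coeFn_indicatorL0 (μ := μ) hB,
      AEEqFun.coeFn_le.mpr (hnrm.1 x), AEEqFun.coeFn_zero (β := ℝ) (μ := μ)]
      with ω h1 h2 h3 h4 h5 h0
    rw [h1, Pi.mul_apply, h2, h3, h4]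
    by_cases hω : ω ∈ B
    · rw [h0] at h5
      simp only [Set.indicator_of_mem hω, Pi.one_apply]
      rw [abs_of_nonneg (inv_nonneg.mpr h5), inv_mul_cancel₀ hω.2]
    · simp [Set.indicator_of_notMem hω]
  · filter_upwards [measure_eq_zero_iff_ae_notMem.mp hμB] with ω hω hωA
    by_contra h
    exact hω ⟨hωA, h⟩

theorem exists_seq_norm_sub_eq_indicatorL0 (hnrm : IsRNNorm nrm) {D : ℕ → Set Ω}
    (hD : Monotone D) (hDn : ∀ n, IndicatorIsNorm nrm (D n)) :
    ∃ z : ℕ → E, (∀ n, nrm (z n) = indicatorL0 μ (D n)) ∧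
      ∀ n m, n ≤ m → nrm (z m - z n) = indicatorL0 μ (D m \ D n) := by
  choose hDm y hy using hDn
  let z : ℕ → E := fun n =>
    Nat.rec (y 0) (fun k zk => zk + indicatorL0 μ (D (k + 1) \ D k) • y (k + 1)) n
  have hz : ∀ n, nrm (z n) = indicatorL0 μ (D n) := by
    intro n
    induction n with
    | zero => exact hy 0
    | succ n ih =>
      rw [← Set.union_eq_right.mpr (hD n.le_succ)]
      exact hnrm.map_add_indicatorL0_smul (hDm n) (hDm (n + 1)) ih (hy (n + 1))
  have hcoh : ∀ n m, n ≤ m → indicatorL0 μ (D n) • z m = z n := by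
    intro n m hnm
    induction m, hnm using Nat.le_induction with
    | base => exact hnrm.indicatorL0_smul_eq_self (hDm n) (hz n)
    | succ m hnm ih =>
      have hdisj : D n ∩ (D (m + 1) \ D m) = ∅ :=
        Set.disjoint_iff_inter_eq_empty.mp (Set.disjoint_sdiff_right.mono_left (hD hnm))
      change indicatorL0 μ (D n) • (z m + indicatorL0 μ (D (m + 1) \ D m) • y (m + 1)) = z n
      rw [smul_add, ih, smul_smul, ← indicatorL0_inter (hDm n) ((hDm _).diff (hDm m)), hdisj,
        indicatorL0_empty, zero_smul, add_zero]
  refine ⟨z, hz, fun n m hnm => ?_⟩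
  rw [← hcoh n m hnm, ← one_smul (Ω →ₘ[μ] ℝ) (z m), smul_smul, mul_one, ← sub_smul,
    hnrm.map_smul_of_isIdempotentElem (isIdempotentElem_indicatorL0 (hDm n)).one_sub,
    hz, one_sub_indicatorL0 (hDm n), ← indicatorL0_inter (hDm n).compl (hDm m),
    Set.inter_comm, ← Set.sdiff_eq]

theorem IndicatorIsNorm.iUnion [IsFiniteMeasure μ] (hnrm : IsRNNorm nrm)
    (hcomplete : IsCompleteRN nrm) {D : ℕ → Set Ω} (hD : Monotone D)
    (hDn : ∀ n, IndicatorIsNorm nrm (D n)) : IndicatorIsNorm nrm (⋃ n, D n) := by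
  obtain ⟨z, hz, hdist⟩ := exists_seq_norm_sub_eq_indicatorL0 hnrm hD hDn
  have hDm n := (hDn n).1
  set C := ⋃ n, D n
  have hCm : MeasurableSet C := MeasurableSet.iUnion hDm
  have hsmall := tendsto_measure_iUnion_sdiff (μ := μ) hD hDm
  have hcauchy_le : ∀ n m, n ≤ m → dP μ (nrm (z m - z n)) ≤ μ (C \ D n) := by
    intro n m hnm
    have hle : |nrm (z m - z n)| ≤ 0 + indicatorL0 μ (D m \ D n) := by
      rw [zero_add, abs_of_nonneg (hnrm.1 _), hdist n m hnm]
    refine (dP_le_dP_add_measure le_rfl ((hDm m).diff (hDm n)) hle).trans ?_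
    rw [dP_zero, zero_add]
    exact measure_mono (Set.sdiff_subset_sdiff_left (Set.subset_iUnion D m))
  obtain ⟨l, hl⟩ := hcomplete z fun ε hε => by
    obtain ⟨N, hN⟩ := eventually_atTop.mp (hsmall.eventually (gt_mem_nhds hε))
    refine ⟨N, fun m hm n hn => ?_⟩
    rcases le_total n m with h | h
    · exact (hcauchy_le n m h).trans_lt (hN n hn)
    · rw [hnrm.map_sub_comm]
      exact (hcauchy_le m n h).trans_lt (hN m hm)
  refine ⟨hCm, l, ?_⟩
  have hbound : ∀ n, dP μ (nrm l - indicatorL0 μ C) ≤ dP μ (nrm (z n - l)) + μ (C \ D n) := by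
    intro n
    refine dP_le_dP_add_measure (hnrm.1 _) (hCm.diff (hDm n)) ?_
    have hsplit : nrm l - indicatorL0 μ C = (nrm l - nrm (z n)) + -indicatorL0 μ (C \ D n) := by
      have hC : indicatorL0 μ C = indicatorL0 μ (D n) + indicatorL0 μ (C \ D n) := by
        rw [← indicatorL0_union (hDm n) (hCm.diff (hDm n)) Set.disjoint_sdiff_right,
          Set.union_sdiff_cancel (Set.subset_iUnion D n)]
      rw [hz, hC]
      abel
    rw [hsplit, hnrm.map_sub_comm]
    refine (abs_add_le _ _).trans (add_le_add (hnrm.abs_sub_le l (z n)) ?_)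
    rw [abs_neg, abs_of_nonneg (L0.nonneg_of_isIdempotentElem
      (isIdempotentElem_indicatorL0 (hCm.diff (hDm n))))]
  have hlim : dP μ (nrm l - indicatorL0 μ C) ≤ 0 := by
    simpa using ge_of_tendsto' (hl.add hsmall) hbound
  exact sub_eq_zero.mp (eq_zero_of_dP_eq_zero (le_antisymm hlim zero_le))

theorem exists_norm_eq_one [IsFiniteMeasure μ] (hnrm : IsRNNorm nrm)
    (hcomplete : IsCompleteRN nrm) (hfull : HasFullSupport nrm) : ∃ x : E, nrm x = 1 := by
  obtain ⟨S, ⟨hSm, x, hx⟩, hmax⟩ := exists_forall_measure_le μ (indicatorIsNorm_empty hnrm)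
    (fun _ _ => IndicatorIsNorm.union hnrm) (fun _ hD => IndicatorIsNorm.iUnion hnrm hcomplete hD)
  refine ⟨x, hx.trans (indicatorL0_eq_one hSm (by_contra fun hSc => ?_))⟩
  obtain ⟨B, hBS, hB, hμB⟩ := exists_subset_indicatorIsNorm hnrm hfull hSm.compl hSc
  have hle := hmax _ (IndicatorIsNorm.union hnrm ⟨hSm, x, hx⟩ hB)
  rw [measure_union (disjoint_compl_right.mono_right hBS) hB.1] at hle
  exact hμB (le_antisymm (ENNReal.le_of_add_le_add_left (measure_ne_top μ S)
    (by simpa using hle)) zero_le)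

theorem exists_abs_add_le_norm_add [IsFiniteMeasure μ] (hnrm : IsRNNorm nrm)
    {f : E →ₗ.[Ω →ₘ[μ] ℝ] (Ω →ₘ[μ] ℝ)} (hf : ∀ z : f.domain, |f z| ≤ nrm z) (x : E) :
    ∃ α, ∀ z : f.domain, |f z + α| ≤ nrm (z + x) := by
  set G : f.domain → Ω →ₘ[μ] ℝ := fun z => -f z - nrm (z + x)
  have hG : ∀ z w : f.domain, G z ≤ nrm (w + x) - f w := by
    intro z w
    have hfw : f w - f z ≤ nrm (w + x) + nrm (z + x) := by
      rw [← f.map_sub]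
      refine (le_abs_self _).trans ((hf (w - z)).trans ?_)
      rw [← hnrm.map_neg (z + x)]
      convert hnrm.2.2.1 (w + x) (-(z + x)) using 2
      rw [Submodule.coe_sub]
      abel
    calc G z = (nrm (w + x) - f w) - (nrm (w + x) + nrm (z + x) - (f w - f z)) := by ring
      _ ≤ nrm (w + x) - f w := sub_le_self _ (sub_nonneg.mpr hfw)
  have hdir : DirectedOn (· ≤ ·) (Set.range G) := by
    rintro _ ⟨z₁, rfl⟩ _ ⟨z₂, rfl⟩
    obtain ⟨e, he, hsup⟩ := exists_isIdempotentElem_mul_add_eq_sup (G z₁) (G z₂)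
    have hglue : G (e • z₁ + (1 - e) • z₂) = G z₁ ⊔ G z₂ := by
      have hx : ((e • z₁ + (1 - e) • z₂ : f.domain) : E) + x =
          e • ((z₁ : E) + x) + (1 - e) • ((z₂ : E) + x) := by
        rw [Submodule.coe_add, Submodule.coe_smul, Submodule.coe_smul, smul_add, smul_add,
          sub_smul, sub_smul, one_smul, one_smul]
        abel
      simp only [G, hx, hnrm.map_smul_add_one_sub_smul he, f.map_add, f.map_smul, smul_eq_mul,
        ← hsup]
      ring
    exact ⟨_, ⟨_, rfl⟩, hglue ▸ le_sup_left, hglue ▸ le_sup_right⟩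
  obtain ⟨α, hα⟩ := exists_isLUB_of_directedOn (Set.range_nonempty G) hdir
    ⟨_, Set.forall_mem_range.mpr fun z => hG z 0⟩
  refine ⟨α, fun z => abs_le'.mpr ⟨?_, ?_⟩⟩
  · exact le_sub_iff_add_le'.mp (hα.2 (Set.forall_mem_range.mpr fun w => hG w z))
  · calc -(f z + α) = (G z - α) + nrm (z + x) := by ring
      _ ≤ nrm (z + x) := add_le_of_nonpos_left (sub_nonpos.mpr (hα.1 ⟨z, rfl⟩))

theorem abs_add_mul_le_norm_add_smul (hnrm : IsRNNorm nrm)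
    {f : E →ₗ.[Ω →ₘ[μ] ℝ] (Ω →ₘ[μ] ℝ)} (hf : ∀ z : f.domain, |f z| ≤ nrm z) {x : E}
    {α : Ω →ₘ[μ] ℝ} (hα : ∀ z : f.domain, |f z + α| ≤ nrm (z + x)) (ξ : Ω →ₘ[μ] ℝ)
    (z : f.domain) : |f z + ξ * α| ≤ nrm (z + ξ • x) := by
  obtain ⟨e, η, he, hξη, heξ⟩ := exists_isIdempotentElem_mul_eq ξ
  have h_on : |e * (f z + ξ * α)| ≤ e * nrm (z + ξ • x) := by
    have h₁ : e * (f z + ξ * α) = ξ * (f (η • z) + α) := by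
      rw [f.map_smul, smul_eq_mul]
      linear_combination -(f z) * hξη + α * heξ
    have h₂ : e * nrm (z + ξ • x) = |ξ| * nrm ((η • z : f.domain) + x) := by
      rw [← hnrm.map_smul_of_isIdempotentElem he, ← hnrm.2.1, Submodule.coe_smul, smul_add,
        smul_add, smul_smul, smul_smul, hξη, heξ]
    rw [h₁, h₂, L0.abs_mul]
    exact mul_le_mul_of_nonneg_left (hα _) (abs_nonneg ξ)
  have h_off : |(1 - e) * (f z + ξ * α)| ≤ (1 - e) * nrm (z + ξ • x) := by
    have hξ : (1 - e) * ξ = 0 := by rw [sub_mul, one_mul, heξ, sub_self]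
    have h₁ : (1 - e) * (f z + ξ * α) = f ((1 - e) • z) := by
      rw [f.map_smul, smul_eq_mul]
      linear_combination α * hξ
    have h₂ : (1 - e) * nrm (z + ξ • x) = nrm ((1 - e) • z : f.domain) := by
      rw [← hnrm.map_smul_of_isIdempotentElem he.one_sub, smul_add, smul_smul, hξ, zero_smul,
        add_zero, Submodule.coe_smul]
    rw [h₁, h₂]
    exact hf _
  calc |f z + ξ * α| = |e * (f z + ξ * α) + (1 - e) * (f z + ξ * α)| := by ring_nf
    _ ≤ e * nrm (z + ξ • x) + (1 - e) * nrm (z + ξ • x) :=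
      (abs_add_le _ _).trans (add_le_add h_on h_off)
    _ = nrm (z + ξ • x) := by ring

theorem _root_.LinearPMap.exists_mkSpanSingleton'_apply {R M N : Type*} [CommRing R]
    [AddCommGroup M] [Module R M] [AddCommGroup N] [Module R N] {x : M} {y : N}
    {H : ∀ c : R, c • x = 0 → c • y = 0}
    (z : (LinearPMap.mkSpanSingleton' (σ := RingHom.id R) x y H).domain) :
    ∃ c : R, (z : M) = c • x ∧ LinearPMap.mkSpanSingleton' (σ := RingHom.id R) x y H z = c • y := by
  obtain ⟨z, hz⟩ := z
  obtain ⟨c, rfl⟩ := Submodule.mem_span_singleton.mp hz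
  exact ⟨c, rfl, LinearPMap.mkSpanSingleton'_apply x y H c hz⟩

theorem exists_extension_step [IsFiniteMeasure μ] (hnrm : IsRNNorm nrm)
    {f : E →ₗ.[Ω →ₘ[μ] ℝ] (Ω →ₘ[μ] ℝ)} (hf : ∀ z : f.domain, |f z| ≤ nrm z) (x : E) :
    ∃ g, f ≤ g ∧ (∀ w : g.domain, |g w| ≤ nrm w) ∧ x ∈ g.domain := by
  obtain ⟨α, hα⟩ := exists_abs_add_le_norm_add hnrm hf x
  have hbound := abs_add_mul_le_norm_add_smul hnrm hf hα
  have hker : ∀ c : Ω →ₘ[μ] ℝ, c • x = 0 → c • α = 0 := fun c hc =>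
    eq_zero_of_abs_nonpos (by simpa [hc, hnrm.map_zero] using hbound c 0)
  set g := LinearPMap.mkSpanSingleton' (σ := RingHom.id _) x α hker
  have hcompat : ∀ (z : f.domain) (y : g.domain), (z : E) = y → f z = g y := by
    intro z y hzy
    obtain ⟨c, hy, hgy⟩ := LinearPMap.exists_mkSpanSingleton'_apply y
    have h := hbound (-c) z
    rw [hzy, hy, neg_smul, add_neg_cancel, hnrm.map_zero] at h
    rw [hgy, smul_eq_mul, ← sub_eq_zero, sub_eq_add_neg, ← neg_mul]
    exact eq_zero_of_abs_nonpos h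
  refine ⟨f.sup g hcompat, f.left_le_sup g hcompat, fun w => ?_,
    Submodule.mem_sup_right (Submodule.mem_span_singleton_self x)⟩
  obtain ⟨y, hy, u, hu, hyu⟩ := Submodule.mem_sup.mp w.2
  obtain ⟨c, hu' : u = c • x, hgu⟩ := LinearPMap.exists_mkSpanSingleton'_apply (H := hker) ⟨u, hu⟩
  rw [LinearPMap.sup_apply hcompat ⟨y, hy⟩ ⟨u, hu⟩ w hyu, hgu, ← hyu, hu', smul_eq_mul]
  exact hbound c ⟨y, hy⟩

theorem exists_extension_of_abs_le_norm [IsFiniteMeasure μ] (hnrm : IsRNNorm nrm)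
    (f : E →ₗ.[Ω →ₘ[μ] ℝ] (Ω →ₘ[μ] ℝ)) (hf : ∀ z : f.domain, |f z| ≤ nrm z) :
    ∃ u : E →ₗ[Ω →ₘ[μ] ℝ] (Ω →ₘ[μ] ℝ), (∀ z : f.domain, u z = f z) ∧ ∀ x, |u x| ≤ nrm x := by
  set S := {g : E →ₗ.[Ω →ₘ[μ] ℝ] (Ω →ₘ[μ] ℝ) | ∀ w : g.domain, |g w| ≤ nrm w}
  have hchain : ∀ c ⊆ S, IsChain (· ≤ ·) c → ∀ y ∈ c, ∃ ub ∈ S, ∀ z ∈ c, z ≤ ub := by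
    intro c hcS hc y hy
    have hcd : DirectedOn (· ≤ ·) c := hc.directedOn
    refine ⟨LinearPMap.sSup c hcd, fun ⟨w, hw⟩ => ?_, fun _ => LinearPMap.le_sSup hcd⟩
    have hdir : DirectedOn (· ≤ ·) (LinearPMap.domain '' c) :=
      directedOn_image.2 (hcd.mono LinearPMap.domain_mono.monotone)
    obtain ⟨_, ⟨g, hgc, rfl⟩, hwg⟩ :=
      (Submodule.mem_sSup_of_directed (Set.Nonempty.image _ ⟨y, hy⟩) hdir).1 hw
    rw [← (LinearPMap.le_sSup hcd hgc).2 (x := ⟨w, hwg⟩) (y := ⟨w, hw⟩) rfl]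
    exact hcS hgc ⟨w, hwg⟩
  obtain ⟨⟨D, g⟩, ⟨-, hfg⟩, hgS, hmax⟩ := zorn_le_nonempty₀ S hchain f hf
  obtain rfl : D = ⊤ := Submodule.eq_top_iff'.mpr fun x => by
    obtain ⟨g', hgg', hg'S, hx⟩ := exists_extension_step hnrm hgS x
    exact (hmax hg'S hgg').1 hx
  exact ⟨g.comp (LinearMap.id.codRestrict ⊤ fun _ => trivial), fun z => (hfg rfl).symm,
    fun x => hgS ⟨x, trivial⟩⟩

theorem exists_dual_of_norm_eq_one [IsFiniteMeasure μ] (hnrm : IsRNNorm nrm) {x₀ : E}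
    (hx₀ : nrm x₀ = 1) : ∃ u : E →ₗ[Ω →ₘ[μ] ℝ] (Ω →ₘ[μ] ℝ), u x₀ = 1 ∧ ∀ x, |u x| ≤ nrm x := by
  have habs : ∀ c : Ω →ₘ[μ] ℝ, nrm (c • x₀) = |c| := fun c => by rw [hnrm.2.1, hx₀, mul_one]
  have hker : ∀ c : Ω →ₘ[μ] ℝ, c • x₀ = 0 → c • (1 : Ω →ₘ[μ] ℝ) = 0 := fun c hc => by
    rw [smul_eq_mul, mul_one]
    exact eq_zero_of_abs_nonpos (by rw [← habs, hc, hnrm.map_zero])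
  set f := LinearPMap.mkSpanSingleton' (σ := RingHom.id _) x₀ 1 hker
  have hf : ∀ z : f.domain, |f z| ≤ nrm z := fun z => by
    obtain ⟨c, hz, hfz⟩ := LinearPMap.exists_mkSpanSingleton'_apply z
    rw [hfz, hz, habs, smul_eq_mul, mul_one]
  obtain ⟨u, hu, hbound⟩ := exists_extension_of_abs_le_norm hnrm f hf
  exact ⟨u, (hu ⟨x₀, Submodule.mem_span_singleton_self x₀⟩).trans
    (LinearPMap.mkSpanSingleton'_apply_self _ _ _ _), hbound⟩

end RandomNormedModule

/-- In a nontrivial complete random normed module `E` with full support there exists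
`x₀ ∈ E` with `‖x₀‖ = 1`, and `u₀ ∈ E*` with `u₀(x₀) = 1` and `‖u₀‖ = 1`. -/
theorem exists_norm_one_and_dual_norm_one
    {Ω : Type*} [MeasurableSpace Ω] {μ : Measure Ω} [IsProbabilityMeasure μ]
    {E : Type*} [AddCommGroup E] [Module (Ω →ₘ[μ] ℝ) E]
    (nrm : E → Ω →ₘ[μ] ℝ) (hnrm : IsRNNorm nrm)
    (hcomplete : IsCompleteRN nrm) (hfull : HasFullSupport nrm) :
    ∃ x₀ : E, nrm x₀ = 1 ∧
      ∃ u₀ : E →ₗ[Ω →ₘ[μ] ℝ] (Ω →ₘ[μ] ℝ), u₀ x₀ = 1 ∧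
        (∀ x : E, |u₀ x| ≤ 1 * nrm x) ∧
        (∀ ξ : Ω →ₘ[μ] ℝ, 0 ≤ ξ → (∀ x : E, |u₀ x| ≤ ξ * nrm x) → 1 ≤ ξ) := by
  obtain ⟨x₀, hx₀⟩ := exists_norm_eq_one hnrm hcomplete hfull
  obtain ⟨u₀, hu₀, hbound⟩ := exists_dual_of_norm_eq_one hnrm hx₀
  refine ⟨x₀, hx₀, u₀, hu₀, fun x => (one_mul (nrm x)).symm ▸ hbound x, fun ξ _ hξ => ?_⟩
  simpa [hu₀, hx₀, abs_of_nonneg (zero_le_one' (Ω →ₘ[μ] ℝ))] using hξ x₀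

end RandomNormed
end

section
/- Let E be a complete random normed module over ℝ and u ∈ E* an element with full support (i.e., ‖u‖ > 0 a.e. on Ω). Then for every ξ ∈ L⁰(F) there exists x₀ ∈ E with u(x₀) = ξ. -/
open MeasureTheory Filter Topology ENNReal
open scoped Classical

namespace RandomNormed

variable {Ω : Type*} [MeasurableSpace Ω] {μ : Measure Ω}

/-! The sets `B` whose indicator lies in the range of `u` are closed under measurable subsets
(multiply a preimage by `1_A`) and under countable disjoint unions: the partial sums of
preimages supported on the pieces are Cauchy in probability, because they agree off the tails
`⋃ k ≥ n, D k`, and since `u` is a.s. bounded its value at their limit is the indicator of the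
union. Full support gives every non-null set a non-null subset of this kind, namely its
intersection with the support of some `u x` (with `(u x)⁻¹ • x` as preimage). Exhaustion then
yields such a set of full measure, i.e. `u x = 1` for some `x`, and `u (ξ • x) = ξ`. -/

theorem _root_.MeasureTheory.AEEqFun.coeFn_sum {β ι : Type*} [TopologicalSpace β]
    [AddCommMonoid β] [ContinuousAdd β] (s : Finset ι) (f : ι → Ω →ₘ[μ] β) :
    ⇑(∑ i ∈ s, f i) =ᵐ[μ] ∑ i ∈ s, ⇑(f i) := by
  induction s using Finset.induction_on with
  | empty => simpa using AEEqFun.coeFn_zero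
  | insert a s ha ih =>
    rw [Finset.sum_insert ha, Finset.sum_insert ha]
    exact (AEEqFun.coeFn_add _ _).trans ih.add_left

theorem dP_le_measure_of_ae_eq_zero {f : Ω →ₘ[μ] ℝ} {A : Set Ω} (hA : MeasurableSet A)
    (h : ∀ᵐ ω ∂μ, ω ∉ A → f ω = 0) : dP μ f ≤ μ A := by
  rw [← lintegral_indicator_one hA]
  refine lintegral_mono_ae ?_
  filter_upwards [h] with ω hω
  by_cases hωA : ω ∈ A
  · simp [hωA]
  · simp [hωA, hω hωA]

theorem ae_nonpos_of_le_of_tendsto_dP {f : Ω →ₘ[μ] ℝ} {g : ℕ → Ω →ₘ[μ] ℝ} {A : Set Ω}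
    (hA : MeasurableSet A) (hfg : ∀ᶠ m in atTop, ∀ᵐ ω ∂μ, ω ∉ A → f ω ≤ g m ω)
    (hg : Tendsto (fun m => dP μ (g m)) atTop (𝓝 0)) : ∀ᵐ ω ∂μ, ω ∉ A → f ω ≤ 0 := by
  set F : Ω → ℝ≥0∞ := Aᶜ.indicator fun ω => ENNReal.ofReal (min (f ω) 1)
  have hF_meas : Measurable F :=
    (ENNReal.measurable_ofReal.comp (f.measurable.min measurable_const)).indicator hA.compl
  have hF_le : ∀ᶠ m in atTop, ∫⁻ ω, F ω ∂μ ≤ dP μ (g m) := by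
    filter_upwards [hfg] with m hm
    refine lintegral_mono_ae ?_
    filter_upwards [hm] with ω hω
    by_cases hωA : ω ∈ A
    · simp [F, hωA]
    · simp only [F, Set.indicator_of_mem (Set.mem_compl hωA)]
      exact ENNReal.ofReal_le_ofReal (min_le_min_right 1 ((hω hωA).trans (le_abs_self _)))
  have hF_zero : ∫⁻ ω, F ω ∂μ = 0 := nonpos_iff_eq_zero.1 (ge_of_tendsto hg hF_le)
  filter_upwards [(lintegral_eq_zero_iff hF_meas).1 hF_zero] with ω hω hωA
  simp only [F, Set.indicator_of_mem (Set.mem_compl hωA), Pi.zero_apply,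
    ENNReal.ofReal_eq_zero] at hω
  exact (min_le_iff.1 hω).resolve_right (by norm_num)

theorem exists_mem_measure_compl_eq_zero [IsFiniteMeasure μ] {C : Set (Set Ω)}
    (hC_meas : ∀ s ∈ C, MeasurableSet s) (hC_nonempty : C.Nonempty)
    (hC_iUnion : ∀ s : ℕ → Set Ω, (∀ n, s n ∈ C) → ⋃ n, s n ∈ C)
    (hC_pos : ∀ t, MeasurableSet t → μ t ≠ 0 → ∃ s ∈ C, s ⊆ t ∧ μ s ≠ 0) :
    ∃ s ∈ C, μ sᶜ = 0 := by
  obtain ⟨m, -, hm_lim, hm_mem⟩ :=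
    exists_seq_tendsto_sSup (hC_nonempty.image μ) (OrderTop.bddAbove _)
  choose s hsC hsμ using hm_mem
  set S := ⋃ n, s n
  have hS : S ∈ C := hC_iUnion s hsC
  have hS_max : ∀ t ∈ C, μ t ≤ μ S := fun t ht =>
    (le_sSup (Set.mem_image_of_mem μ ht)).trans <|
      le_of_tendsto' hm_lim fun n => hsμ n ▸ measure_mono (Set.subset_iUnion s n)
  refine ⟨S, hS, by_contra fun hne => ?_⟩
  obtain ⟨t, htC, htS, ht⟩ := hC_pos _ (hC_meas S hS).compl hne
  have hU : t ∪ S ∈ C := by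
    -- the sequence `t, s 0, s 1, …`
    have := hC_iUnion (fun n => Nat.rec t (fun k _ => s k) n) fun n => by
      cases n <;> simp [htC, hsC]
    rwa [← Set.union_iUnion_nat_succ] at this
  have hle := hS_max _ hU
  rw [Set.union_comm, measure_union (Set.disjoint_of_subset_right htS disjoint_compl_right)
    (hC_meas t htC)] at hle
  have ht0 : μ t ≤ 0 :=
    (ENNReal.add_le_add_iff_left (measure_ne_top μ S)).1 (hle.trans_eq (add_zero _).symm)
  exact ht (nonpos_iff_eq_zero.1 ht0)

section Functional

variable {E : Type*} [AddCommGroup E] [Module (Ω →ₘ[μ] ℝ) E] {nrm : E → Ω →ₘ[μ] ℝ}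

theorem IsRNNorm.ae_nonneg (hnrm : IsRNNorm nrm) (x : E) : ∀ᵐ ω ∂μ, 0 ≤ nrm x ω := by
  filter_upwards [AEEqFun.coeFn_le.2 (hnrm.1 x), AEEqFun.coeFn_zero (β := ℝ) (μ := μ)]
    with ω h h0
  rwa [h0] at h

theorem IsRNNorm.ae_le_add (hnrm : IsRNNorm nrm) (x y : E) :
    ∀ᵐ ω ∂μ, nrm (x + y) ω ≤ nrm x ω + nrm y ω := by
  filter_upwards [AEEqFun.coeFn_le.2 (hnrm.2.2.1 x y), AEEqFun.coeFn_add (nrm x) (nrm y)]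
    with ω h hadd
  rwa [hadd] at h

theorem IsRNNorm.ae_smul (hnrm : IsRNNorm nrm) (c : Ω →ₘ[μ] ℝ) (x : E) :
    ∀ᵐ ω ∂μ, nrm (c • x) ω = |c ω| * nrm x ω := by
  filter_upwards [AEEqFun.coeFn_mul |c| (nrm x), AEEqFun.coeFn_abs c] with ω hmul habs
  rw [hnrm.2.1, hmul, Pi.mul_apply, habs]

def IsRNNorm.vanishingOff (hnrm : IsRNNorm nrm) (A : Set Ω) : Submodule (Ω →ₘ[μ] ℝ) E where
  carrier := {x | ∀ᵐ ω ∂μ, ω ∉ A → nrm x ω = 0}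
  add_mem' {x y} hx hy := by
    filter_upwards [hx, hy, hnrm.ae_le_add x y, hnrm.ae_nonneg (x + y)] with ω hx hy hle h0 hω
    exact le_antisymm (by simpa [hx hω, hy hω] using hle) h0
  zero_mem' := by
    filter_upwards [hnrm.ae_smul 0 0, AEEqFun.coeFn_zero (β := ℝ) (μ := μ)] with ω h h0 _
    rwa [zero_smul, h0, Pi.zero_apply, abs_zero, zero_mul] at h
  smul_mem' c x hx := by
    filter_upwards [hx, hnrm.ae_smul c x] with ω hx h hω
    rw [h, hx hω, mul_zero]

@[simp]
theorem IsRNNorm.mem_vanishingOff (hnrm : IsRNNorm nrm) {A : Set Ω} {x : E} :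
    x ∈ hnrm.vanishingOff A ↔ ∀ᵐ ω ∂μ, ω ∉ A → nrm x ω = 0 :=
  Iff.rfl

theorem IsRNNorm.vanishingOff_mono (hnrm : IsRNNorm nrm) {A B : Set Ω} (hAB : A ⊆ B) :
    hnrm.vanishingOff A ≤ hnrm.vanishingOff B := fun x hx => by
  rw [mem_vanishingOff] at hx ⊢
  filter_upwards [hx] with ω hω hωB using hω fun hωA => hωB (hAB hωA)

theorem IsCompleteRN.exists_sub_mem_vanishingOff (hcomplete : IsCompleteRN nrm)
    (hnrm : IsRNNorm nrm) {T : ℕ → Set Ω} (hT : ∀ n, MeasurableSet (T n))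
    (hT_lim : Tendsto (fun n => μ (T n)) atTop (𝓝 0)) {s : ℕ → E}
    (hs : ∀ n m, n ≤ m → s m - s n ∈ hnrm.vanishingOff (T n)) :
    ∃ l, ∀ n, s n - l ∈ hnrm.vanishingOff (T n) := by
  obtain ⟨l, hl⟩ := hcomplete s fun ε hε => by
    obtain ⟨N, hN⟩ := (hT_lim.eventually_lt_const hε).exists
    refine ⟨N, fun m hm n hn => (dP_le_measure_of_ae_eq_zero (hT N) ?_).trans_lt hN⟩
    have := sub_mem (hs N m hm) (hs N n hn)
    rwa [sub_sub_sub_cancel_right] at this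
  refine ⟨l, fun n => ?_⟩
  have hle : ∀ᶠ m in atTop, ∀ᵐ ω ∂μ, ω ∉ T n → nrm (s n - l) ω ≤ nrm (s m - l) ω := by
    filter_upwards [eventually_ge_atTop n] with m hm
    filter_upwards [neg_mem (hs n m hm), hnrm.ae_le_add (-(s m - s n)) (s m - l)]
      with ω h0 hle hω
    rwa [h0 hω, zero_add, neg_sub, sub_add_sub_cancel] at hle
  filter_upwards [ae_nonpos_of_le_of_tendsto_dP (hT n) hle hl, hnrm.ae_nonneg (s n - l)]
    with ω h1 h2 hω
  exact le_antisymm (h1 hω) h2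

variable {u : E →ₗ[Ω →ₘ[μ] ℝ] (Ω →ₘ[μ] ℝ)}

theorem IsBoundedLF.ae_eq_zero_of_mem_vanishingOff (hu : IsBoundedLF nrm u)
    (hnrm : IsRNNorm nrm) {A : Set Ω} {x : E} (hx : x ∈ hnrm.vanishingOff A) :
    ∀ᵐ ω ∂μ, ω ∉ A → u x ω = 0 := by
  obtain ⟨ξ₀, -, hξ₀⟩ := hu
  filter_upwards [hx, AEEqFun.coeFn_le.2 (hξ₀ x), AEEqFun.coeFn_abs (u x),
    AEEqFun.coeFn_mul ξ₀ (nrm x)] with ω hx hle habs hmul hω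
  rw [habs, hmul, Pi.mul_apply, hx hω, mul_zero] at hle
  exact abs_nonpos_iff.1 hle

variable (u) in
def IndicatorMemRange (B : Set Ω) : Prop :=
  MeasurableSet B ∧ ∃ x, ⇑(u x) =ᵐ[μ] B.indicator 1

variable (u) in
theorem indicatorMemRange_empty : IndicatorMemRange u (∅ : Set Ω) :=
  ⟨MeasurableSet.empty, 0, by
    rw [map_zero, Set.indicator_empty]; exact AEEqFun.coeFn_zero⟩

variable (u) in
theorem indicatorMemRange_support (x : E) : IndicatorMemRange u (Function.support (u x)) := by
  have hinv : Measurable fun ω => (u x ω)⁻¹ := (u x).measurable.inv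
  set ζ : Ω →ₘ[μ] ℝ := AEEqFun.mk _ hinv.aestronglyMeasurable
  refine ⟨measurableSet_support (u x).measurable, ζ • x, ?_⟩
  rw [map_smul, smul_eq_mul]
  filter_upwards [AEEqFun.coeFn_mul ζ (u x), AEEqFun.coeFn_mk _ hinv.aestronglyMeasurable]
    with ω hmul hζ
  rw [hmul, Pi.mul_apply, hζ]
  by_cases hω : u x ω = 0 <;> simp [hω]

theorem IndicatorMemRange.of_subset {A B : Set Ω} (hB : IndicatorMemRange u B)
    (hA : MeasurableSet A) (hAB : A ⊆ B) : IndicatorMemRange u A := by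
  obtain ⟨-, x, hx⟩ := hB
  have hχ := ((measurable_one : Measurable (1 : Ω → ℝ)).indicator hA).aestronglyMeasurable
    (μ := μ)
  refine ⟨hA, AEEqFun.mk _ hχ • x, ?_⟩
  rw [map_smul, smul_eq_mul]
  filter_upwards [AEEqFun.coeFn_mul (AEEqFun.mk _ hχ) (u x), AEEqFun.coeFn_mk _ hχ, hx]
    with ω hmul hχω hxω
  rw [hmul, Pi.mul_apply, hχω, hxω, ← Pi.mul_apply, ← Set.inter_indicator_one,
    Set.inter_eq_left.2 hAB]

theorem IsRNNorm.exists_mem_vanishingOff (hnrm : IsRNNorm nrm) {B : Set Ω}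
    (hB : IndicatorMemRange u B) :
    ∃ x ∈ hnrm.vanishingOff B, ⇑(u x) =ᵐ[μ] B.indicator 1 := by
  obtain ⟨hBm, x, hx⟩ := hB
  have hχ := ((measurable_one : Measurable (1 : Ω → ℝ)).indicator hBm).aestronglyMeasurable
    (μ := μ)
  refine ⟨AEEqFun.mk _ hχ • x, ?_, ?_⟩
  · rw [mem_vanishingOff]
    filter_upwards [hnrm.ae_smul (AEEqFun.mk _ hχ) x, AEEqFun.coeFn_mk _ hχ] with ω h hχω hω
    rw [h, hχω, Set.indicator_of_notMem hω, abs_zero, zero_mul]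
  · rw [map_smul, smul_eq_mul]
    filter_upwards [AEEqFun.coeFn_mul (AEEqFun.mk _ hχ) (u x), AEEqFun.coeFn_mk _ hχ, hx]
      with ω hmul hχω hxω
    rw [hmul, Pi.mul_apply, hχω, hxω, ← Pi.mul_apply, ← Set.inter_indicator_one,
      Set.inter_self]

theorem IndicatorMemRange.iUnion_of_pairwise_disjoint [IsFiniteMeasure μ]
    (hnrm : IsRNNorm nrm) (hcomplete : IsCompleteRN nrm) (hu : IsBoundedLF nrm u)
    {D : ℕ → Set Ω} (hD : ∀ k, IndicatorMemRange u (D k))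
    (hdisj : Pairwise (Function.onFun Disjoint D)) :
    IndicatorMemRange u (⋃ k, D k) := by
  have hDm k := (hD k).1
  choose x hxV hxu using fun k => hnrm.exists_mem_vanishingOff (hD k)
  set T : ℕ → Set Ω := fun n => ⋃ k ≥ n, D k
  set s : ℕ → E := fun n => ∑ k ∈ Finset.range n, x k
  have hT_lim : Tendsto (fun n => μ (T n)) atTop (𝓝 0) :=
    tendsto_measure_biUnion_Ici_zero_of_pairwise_disjoint (fun k => (hDm k).nullMeasurableSet)
      hdisj
  have hs : ∀ n m, n ≤ m → s m - s n ∈ hnrm.vanishingOff (T n) := fun n m hnm => by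
    rw [← Finset.sum_Ico_eq_sub _ hnm]
    exact Submodule.sum_mem _ fun k hk => hnrm.vanishingOff_mono
      (Set.subset_biUnion_of_mem (u := D) (Finset.mem_Ico.1 hk).1) (hxV k)
  obtain ⟨l, hl⟩ := hcomplete.exists_sub_mem_vanishingOff hnrm
    (fun n => MeasurableSet.biUnion (Set.to_countable _) fun k _ => hDm k) hT_lim hs
  have hus : ∀ n, ⇑(u (s n)) =ᵐ[μ] (⋃ k ∈ Finset.range n, D k).indicator 1 := fun n => by
    rw [map_sum, Finset.indicator_biUnion _ _ (hdisj.set_pairwise _)]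
    filter_upwards [AEEqFun.coeFn_sum (Finset.range n) fun k => u (x k), ae_all_iff.2 hxu]
      with ω hsum hxω
    simp [hsum, hxω]
  have hT_null : ∀ᵐ ω ∂μ, ∃ n, ω ∉ T n := by
    have h : μ (⋂ n, T n) = 0 := nonpos_iff_eq_zero.1 <|
      ge_of_tendsto' hT_lim fun n => measure_mono (Set.iInter_subset T n)
    filter_upwards [measure_eq_zero_iff_ae_notMem.1 h] with ω hω
    simpa using hω
  refine ⟨MeasurableSet.iUnion hDm, l, ?_⟩
  filter_upwards [hT_null, ae_all_iff.2 hus,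
    ae_all_iff.2 fun n => hu.ae_eq_zero_of_mem_vanishingOff hnrm (hl n),
    ae_all_iff.2 fun n => (map_sub u (s n) l).symm ▸ AEEqFun.coeFn_sub (u (s n)) (u l)]
    with ω ⟨n, hn⟩ hus hul hsub
  have hmem : ω ∈ ⋃ k ∈ Finset.range n, D k ↔ ω ∈ ⋃ k, D k := by
    simp only [T, Set.mem_iUnion, not_exists] at hn
    simp only [Set.mem_iUnion, Finset.mem_range]
    exact ⟨fun ⟨k, _, hk⟩ => ⟨k, hk⟩,
      fun ⟨k, hk⟩ => ⟨k, not_le.1 fun hkn => hn k hkn hk, hk⟩⟩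
  rw [← sub_eq_zero.1 ((hsub n).symm.trans (hul n hn)), hus n]
  simp only [Set.indicator_apply, hmem]

theorem IndicatorMemRange.iUnion [IsFiniteMeasure μ] (hnrm : IsRNNorm nrm)
    (hcomplete : IsCompleteRN nrm) (hu : IsBoundedLF nrm u) {B : ℕ → Set Ω}
    (hB : ∀ n, IndicatorMemRange u (B n)) : IndicatorMemRange u (⋃ n, B n) := by
  rw [← iUnion_disjointed]
  refine iUnion_of_pairwise_disjoint hnrm hcomplete hu (fun n => ?_) (disjoint_disjointed B)
  exact (hB n).of_subset (MeasurableSet.disjointed (fun k => (hB k).1) n)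
    (disjointed_subset B n)

theorem exists_measure_inter_support_ne_zero (hu : IsBoundedLF nrm u)
    (hfullu : ∀ ξ : Ω →ₘ[μ] ℝ, 0 ≤ ξ → (∀ x : E, |u x| ≤ ξ * nrm x) → ∀ᵐ ω ∂μ, 0 < ξ ω)
    {A : Set Ω} (hA : MeasurableSet A) (hμA : μ A ≠ 0) :
    ∃ x, μ (A ∩ Function.support (u x)) ≠ 0 := by
  obtain ⟨ξ₀, hξ₀_nonneg, hξ₀⟩ := hu
  by_contra! h
  have hvanish : ∀ x, ∀ᵐ ω ∂μ, ω ∈ A → u x ω = 0 := fun x => by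
    filter_upwards [measure_eq_zero_iff_ae_notMem.1 (h x)] with ω hω hωA
    simpa [hωA] using hω
  -- otherwise `1_{Aᶜ} ξ₀` is an a.s. bound of `u` that vanishes on the non-null set `A`
  have hmeas := (ξ₀.measurable.indicator hA.compl).aestronglyMeasurable (μ := μ)
  set ξ : Ω →ₘ[μ] ℝ := AEEqFun.mk _ hmeas
  have hξ : ⇑ξ =ᵐ[μ] Aᶜ.indicator ξ₀ := AEEqFun.coeFn_mk _ _
  have hξ_nonneg : 0 ≤ ξ := by
    rw [← AEEqFun.coeFn_le]
    filter_upwards [hξ, AEEqFun.coeFn_le.2 hξ₀_nonneg, AEEqFun.coeFn_zero (β := ℝ) (μ := μ)]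
      with ω hξω hξ₀ω h0
    rw [hξω, h0]
    rw [h0] at hξ₀ω
    exact Set.indicator_apply_nonneg fun _ => hξ₀ω
  have hξ_bound : ∀ x, |u x| ≤ ξ * nrm x := fun x => by
    rw [← AEEqFun.coeFn_le]
    filter_upwards [hvanish x, AEEqFun.coeFn_le.2 (hξ₀ x), AEEqFun.coeFn_abs (u x),
      AEEqFun.coeFn_mul ξ (nrm x), AEEqFun.coeFn_mul ξ₀ (nrm x), hξ]
      with ω h0 hle habs hmul hmul₀ hξω
    rw [habs, hmul₀] at hle
    rw [habs, hmul, Pi.mul_apply, hξω]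
    by_cases hωA : ω ∈ A
    · simp [h0 hωA, hωA]
    · simpa [hωA] using hle
  have hA_null : ∀ᵐ ω ∂μ, ω ∉ A := by
    filter_upwards [hfullu ξ hξ_nonneg hξ_bound, hξ] with ω hpos hξω hωA
    simp [hξω, hωA] at hpos
  exact hμA (measure_eq_zero_iff_ae_notMem.2 hA_null)

theorem exists_indicatorMemRange_subset (hu : IsBoundedLF nrm u)
    (hfullu : ∀ ξ : Ω →ₘ[μ] ℝ, 0 ≤ ξ → (∀ x : E, |u x| ≤ ξ * nrm x) → ∀ᵐ ω ∂μ, 0 < ξ ω)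
    {A : Set Ω} (hA : MeasurableSet A) (hμA : μ A ≠ 0) :
    ∃ B, IndicatorMemRange u B ∧ B ⊆ A ∧ μ B ≠ 0 := by
  obtain ⟨x, hx⟩ := exists_measure_inter_support_ne_zero hu hfullu hA hμA
  refine ⟨_, (indicatorMemRange_support u x).of_subset ?_ Set.inter_subset_right,
    Set.inter_subset_left, hx⟩
  exact hA.inter (measurableSet_support (u x).measurable)

end Functional

/-- `hfullu` encodes `‖u‖ > 0` a.e.: every a.s. bound `ξ` of `u` (`|u x| ≤ ξ * nrm x`) is
a.e. strictly positive. -/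
theorem full_support_functional_is_surjective
    {Ω : Type*} [MeasurableSpace Ω] {μ : Measure Ω} [IsProbabilityMeasure μ]
    {E : Type*} [AddCommGroup E] [Module (Ω →ₘ[μ] ℝ) E]
    (nrm : E → Ω →ₘ[μ] ℝ) (hnrm : IsRNNorm nrm) (hcomplete : IsCompleteRN nrm)
    (u : E →ₗ[Ω →ₘ[μ] ℝ] (Ω →ₘ[μ] ℝ)) (hu : IsBoundedLF nrm u)
    (hfullu : ∀ ξ : Ω →ₘ[μ] ℝ, 0 ≤ ξ → (∀ x : E, |u x| ≤ ξ * nrm x) →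
      ∀ᵐ ω ∂μ, 0 < ξ ω) :
    ∀ ξ : Ω →ₘ[μ] ℝ, ∃ x₀ : E, u x₀ = ξ := by
  intro ξ
  obtain ⟨B, ⟨-, x, hx⟩, hBc⟩ :=
    exists_mem_measure_compl_eq_zero (C := {B | IndicatorMemRange u B}) (fun B hB => hB.1)
      ⟨∅, indicatorMemRange_empty u⟩ (fun B hB => IndicatorMemRange.iUnion hnrm hcomplete hu hB)
      (fun A hA hμA => exists_indicatorMemRange_subset hu hfullu hA hμA)
  have hux : u x = 1 := by
    refine AEEqFun.ext (hx.trans ?_)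
    filter_upwards [measure_eq_zero_iff_ae_notMem.1 hBc, AEEqFun.coeFn_one (β := ℝ) (μ := μ)]
      with ω hω h1
    rw [h1, Set.indicator_of_mem (not_not.1 hω)]
  exact ⟨ξ • x, by rw [map_smul, hux, smul_eq_mul, mul_one]⟩

end RandomNormed
end

section
/- Let T: 𝒞(E) → 𝒞(E) be a fully order preserving operator on the class of proper lower semicontinuous L⁰-convex functions on a random normed module E. Then for any family {f_i}_{i∈I} ⊂ 𝒞(E) such that the pointwise supremum ⋁_{i∈I} f_i belongs to 𝒞(E), one has T(⋁_{i∈I} f_i) = ⋁_{i∈I} T(f_i). -/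
open MeasureTheory Filter Topology ENNReal
open scoped Classical

namespace RandomNormed

variable {Ω : Type*} [MeasurableSpace Ω] {μ : Measure Ω}

/-!
The essential supremum `s` of the family `T fᵢ` exists (it is the supremum along a countable
subfamily) and, as a supremum of proper lower semicontinuous `L⁰`-convex functions lying below
`T (⋁ᵢ fᵢ)`, it is again in `𝒞(E)`. Surjectivity gives `s = T G`; since `T` reflects the order,
`fᵢ ≤ G` for all `i`, hence `⋁ᵢ fᵢ ≤ G` and `T (⋁ᵢ fᵢ) ≤ T G = s`. The reverse inequality is
monotonicity of `T`.
-/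

section EssSup

variable {α β ι : Type*} [MeasurableSpace α]

/-- Unlike `IsAESup`, leastness is tested against all a.e. bounds `b`, measurable or not. -/
def IsEssSup [LE β] (μ : Measure α) (g : ι → α → β) (s : α → β) : Prop :=
  (∀ i, g i ≤ᵐ[μ] s) ∧ ∀ b : α → β, (∀ i, g i ≤ᵐ[μ] b) → s ≤ᵐ[μ] b

theorem exists_countable_forall_le_of_monotone {γ : Type*} [CompleteLinearOrder γ]
    [TopologicalSpace γ] [OrderTopology γ] [FirstCountableTopology γ]
    (I : Set ι → γ) (hI : Monotone I) :
    ∃ C : Set ι, C.Countable ∧ ∀ C' : Set ι, C'.Countable → I C' ≤ I C := by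
  obtain ⟨u, -, hu_lim, hu_mem⟩ := exists_seq_tendsto_sSup (S := I '' {C | C.Countable})
    ⟨_, ∅, Set.countable_empty, rfl⟩ (OrderTop.bddAbove _)
  choose C hC hCu using hu_mem
  refine ⟨⋃ n, C n, Set.countable_iUnion hC, fun C' hC' => ?_⟩
  calc I C' ≤ sSup (I '' {C | C.Countable}) := le_sSup ⟨C', hC', rfl⟩
    _ ≤ I (⋃ n, C n) := le_of_tendsto' hu_lim fun n => hCu n ▸ hI (Set.subset_iUnion C n)

variable [CompleteLinearOrder β] [TopologicalSpace β] [OrderTopology β]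
  [SecondCountableTopology β] [MeasurableSpace β] [BorelSpace β]

/-- The essential supremum of an arbitrary family is the supremum over a countable
subfamily `C` maximizing `∫ φ (⨆ i ∈ C, g i)`, for a bounded strictly monotone gauge `φ`. -/
theorem exists_isEssSup_of_strictMono {μ : Measure α} [IsFiniteMeasure μ]
    (φ : β → ℝ≥0∞) (hφ : StrictMono φ) (hφ_le : ∀ b, φ b ≤ 1)
    (g : ι → α → β) (hg : ∀ i, AEMeasurable (g i) μ) :
    ∃ s : α → β, AEMeasurable s μ ∧ IsEssSup μ g s := by
  set I : Set ι → ℝ≥0∞ := fun C => ∫⁻ ω, φ (⨆ i ∈ C, g i ω) ∂μ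
  obtain ⟨C, hC, hC_max⟩ := exists_countable_forall_le_of_monotone I
    fun C C' h => lintegral_mono fun ω => hφ.monotone (biSup_mono h)
  refine ⟨fun ω => ⨆ i ∈ C, g i ω, AEMeasurable.biSup C hC fun i _ => hg i, fun i => ?_,
    fun b hb => ((ae_ball_iff hC).2 fun i _ => hb i).mono fun ω h => iSup₂_le h⟩
  by_contra hi
  have hI_ne_top : I C ≠ ⊤ := ne_top_of_le_ne_top (measure_ne_top μ Set.univ) <|
    (lintegral_mono fun ω => hφ_le _).trans (lintegral_one (μ := μ)).le
  have hlt : I C < I (insert i C) := by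
    refine lintegral_strict_mono_of_ae_le_of_ae_lt_on
      (hφ.monotone.measurable.comp_aemeasurable
        (AEMeasurable.biSup _ (hC.insert i) fun j _ => hg j))
      hI_ne_top (.of_forall fun ω => hφ.monotone (biSup_mono (Set.subset_insert i C)))
      (s := {ω | ¬ g i ω ≤ ⨆ j ∈ C, g j ω}) (fun h0 => hi (ae_iff.mpr h0)) (.of_forall ?_)
    intro ω hω
    rw [iSup_insert, sup_eq_left.mpr (not_le.mp hω).le]
    exact hφ (not_le.mp hω)
  exact (hC_max _ (hC.insert i)).not_gt hlt

end EssSup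

theorem EReal.exists_strictMono_le_one : ∃ φ : EReal → ℝ≥0∞, StrictMono φ ∧ ∀ x, φ x ≤ 1 := by
  refine ⟨fun x => ((EReal.exp x)⁻¹ + 1)⁻¹, fun x y hxy => ?_, fun x => ?_⟩
  · have hinv : (EReal.exp y)⁻¹ < (EReal.exp x)⁻¹ :=
      ENNReal.inv_lt_inv.mpr (EReal.exp_strictMono hxy)
    exact ENNReal.inv_lt_inv.mpr (ENNReal.add_lt_add_right ENNReal.one_ne_top hinv)
  · exact ENNReal.inv_le_one.mpr le_add_self

theorem exists_isEssSup_ereal [IsFiniteMeasure μ] {ι : Type*}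
    (g : ι → Ω → EReal) (hg : ∀ i, AEMeasurable (g i) μ) :
    ∃ s : Ω → EReal, AEMeasurable s μ ∧ IsEssSup μ g s :=
  let ⟨φ, hφ, hφ_le⟩ := EReal.exists_strictMono_le_one
  exists_isEssSup_of_strictMono φ hφ hφ_le g hg

theorem nonempty_of_isAESup [NeZero μ] {S : Set (Ω → EReal)} {s : Ω → EReal}
    (hs : IsAESup μ S s) (hs_bot : ∀ᵐ ω ∂μ, ⊥ < s ω) : S.Nonempty := by
  by_contra hS
  rw [Set.not_nonempty_iff_eq_empty] at hS
  have hle := hs.2 (fun _ => ⊥) aemeasurable_const (by simp [hS])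
  obtain ⟨ω, hω_le, hω_lt⟩ := (hle.and hs_bot).exists
  exact (hω_lt.trans_le hω_le).false

theorem AEEqFun.ae_nonneg_of_nonneg {ξ : Ω →ₘ[μ] ℝ} (hξ : 0 ≤ ξ) : ∀ᵐ ω ∂μ, 0 ≤ ξ ω := by
  filter_upwards [AEEqFun.coeFn_le.mpr hξ, AEEqFun.coeFn_zero (β := ℝ) (μ := μ)] with ω h h0
  rwa [h0] at h

theorem AEEqFun.ae_one_sub_nonneg_of_le_one {ξ : Ω →ₘ[μ] ℝ} (hξ : ξ ≤ 1) :
    ∀ᵐ ω ∂μ, 0 ≤ (1 - ξ : Ω →ₘ[μ] ℝ) ω := by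
  filter_upwards [AEEqFun.coeFn_le.mpr hξ, AEEqFun.coeFn_one (β := ℝ) (μ := μ),
    AEEqFun.coeFn_sub (1 : Ω →ₘ[μ] ℝ) ξ] with ω h h1 hsub
  rw [h1] at h
  rw [hsub, Pi.sub_apply, h1, sub_nonneg]
  exact h

section CvxFn

variable {E : Type*} [AddCommGroup E] [Module (Ω →ₘ[μ] ℝ) E] {nrm : E → Ω →ₘ[μ] ℝ}
  {ι : Type*} {f : ι → CvxFn nrm} {s : E → Ω → EReal}

theorem convex_of_isEssSup (hs : ∀ x, IsEssSup μ (fun i => (f i).1 x) (s x))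
    (ξ : Ω →ₘ[μ] ℝ) (hξ0 : 0 ≤ ξ) (hξ1 : ξ ≤ 1) (x y : E) :
    ∀ᵐ ω ∂μ, s (ξ • x + (1 - ξ) • y) ω ≤
      ((ξ ω : ℝ) : EReal) * s x ω + (((1 - ξ : Ω →ₘ[μ] ℝ) ω : ℝ) : EReal) * s y ω := by
  refine (hs _).2 _ fun i => ?_
  filter_upwards [(f i).2.2.2.2.1 ξ hξ0 hξ1 x y, (hs x).1 i, (hs y).1 i,
    AEEqFun.ae_nonneg_of_nonneg hξ0, AEEqFun.ae_one_sub_nonneg_of_le_one hξ1]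
    with ω hconv hx hy hξω h1ξω
  refine hconv.trans (add_le_add ?_ ?_)
  · exact mul_le_mul_of_nonneg_left hx (EReal.coe_nonneg.mpr hξω)
  · exact mul_le_mul_of_nonneg_left hy (EReal.coe_nonneg.mpr h1ξω)

theorem isCvxFn_of_isEssSup [Nonempty ι] (hs_meas : ∀ x, AEMeasurable (s x) μ)
    (hs : ∀ x, IsEssSup μ (fun i => (f i).1 x) (s x))
    {h : CvxFn nrm} (hfh : ∀ i, CleFn μ (f i).1 h.1) : IsCvxFn nrm s := by
  obtain ⟨i₀⟩ := ‹Nonempty ι›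
  refine ⟨hs_meas, fun x => ?_, ?_, convex_of_isEssSup hs, ?_⟩
  · filter_upwards [(hs x).1 i₀, (f i₀).2.2.1 x] with ω hle hlt
    exact hlt.trans_le hle
  · obtain ⟨x₀, hx₀⟩ := h.2.2.2.1
    refine ⟨x₀, ?_⟩
    filter_upwards [(hs x₀).2 _ fun i => hfh i x₀, hx₀] with ω hle hlt
    exact hle.trans_lt hlt
  · intro x r x₀ r₀ hxr hx hr
    refine (hs x₀).2 _ fun i => (f i).2.2.2.2.2 x r x₀ r₀ (fun n => ?_) hx hr
    exact ((hs (x n)).1 i).trans (hxr n)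

end CvxFn

theorem fully_order_preserving_commutes_with_sup_general
    {Ω : Type*} [MeasurableSpace Ω] {μ : Measure Ω} [IsProbabilityMeasure μ]
    {E : Type*} [AddCommGroup E] [Module (Ω →ₘ[μ] ℝ) E]
    (nrm : E → Ω →ₘ[μ] ℝ)
    (T : CvxFn nrm → CvxFn nrm) (hT : IsFullyOrderPreserving nrm T)
    {ι : Type*} (f : ι → CvxFn nrm) (F : CvxFn nrm)
    (hsup : ∀ x : E, IsAESup μ {g : Ω → EReal | ∃ i : ι, g = (f i).1 x} (F.1 x)) :
    ∀ x : E, IsAESup μ {g : Ω → EReal | ∃ i : ι, g = (T (f i)).1 x} ((T F).1 x) := by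
  obtain ⟨-, i, -⟩ := nonempty_of_isAESup (hsup 0) (F.2.2.1 0)
  have : Nonempty ι := ⟨i⟩
  choose s hs_meas hs using fun x =>
    exists_isEssSup_ereal (μ := μ) (fun i => (T (f i)).1 x) fun i => (T (f i)).2.1 x
  have hfF : ∀ i, CleFn μ (f i).1 F.1 := fun i x => (hsup x).1 _ ⟨i, rfl⟩
  have hTfF : ∀ i, CleFn μ (T (f i)).1 (T F).1 := fun i => (hT.1 _ _).mp (hfF i)
  obtain ⟨G, hG⟩ := hT.2 ⟨s, isCvxFn_of_isEssSup hs_meas hs hTfF⟩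
  replace hG : ∀ x, (T G).1 x =ᵐ[μ] s x := hG
  have hfG : ∀ i, CleFn μ (f i).1 G.1 := fun i => (hT.1 _ _).mpr fun x =>
    ((hs x).1 i).trans (hG x).symm.le
  have hFG : CleFn μ F.1 G.1 := fun x =>
    (hsup x).2 _ (G.2.1 x) (by rintro _ ⟨i, rfl⟩; exact hfG i x)
  intro x
  refine ⟨by rintro _ ⟨i, rfl⟩; exact hTfF i x, fun b _ hb => ?_⟩
  calc (T F).1 x ≤ᵐ[μ] (T G).1 x := (hT.1 _ _).mp hFG x
    _ =ᵐ[μ] s x := hG x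
    _ ≤ᵐ[μ] b := (hs x).2 b fun i => hb _ ⟨i, rfl⟩

/-- A fully order preserving operator `T : 𝒞(E) → 𝒞(E)` commutes with (pointwise, i.e.
`L̄⁰`-valued) suprema of families whose supremum stays in `𝒞(E)`:
`T(⋁ᵢ fᵢ) = ⋁ᵢ T(fᵢ)`. -/
theorem fully_order_preserving_commutes_with_sup
    {Ω : Type*} [MeasurableSpace Ω] {μ : Measure Ω} [IsProbabilityMeasure μ]
    {E : Type*} [AddCommGroup E] [Module (Ω →ₘ[μ] ℝ) E]
    (nrm : E → Ω →ₘ[μ] ℝ) (hnrm : IsRNNorm nrm)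
    (T : CvxFn nrm → CvxFn nrm) (hT : IsFullyOrderPreserving nrm T)
    {ι : Type*} (f : ι → CvxFn nrm) (F : CvxFn nrm)
    (hsup : ∀ x : E, IsAESup μ {g : Ω → EReal | ∃ i : ι, g = (f i).1 x} (F.1 x)) :
    ∀ x : E, IsAESup μ {g : Ω → EReal | ∃ i : ι, g = (T (f i)).1 x} ((T F).1 x) :=
  fully_order_preserving_commutes_with_sup_general nrm T hT f F hsup

end RandomNormed
end

section
/- Let E be a complete random normed module with full support and T: 𝒞(E) → 𝒞(E) a stable fully order preserving operator. Then T maps every finite-valued function to a finite-valued function: if f ∈ 𝒞(E) satisfies f(x) ∈ L⁰(F) for all x ∈ E, then T(f)(x) ∈ L⁰(F) for all x ∈ E. -/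
open MeasureTheory Filter Topology ENNReal
open scoped Classical

namespace RandomNormed

variable {Ω : Type*} [MeasurableSpace Ω] {μ : Measure Ω}

/-- A stable fully order preserving operator `T : 𝒞(E) → 𝒞(E)` on a complete random
normed module with full support maps `L⁰(F)`-valued (i.e. a.e. finite-valued) functions
to `L⁰(F)`-valued functions. -/
theorem stable_fully_order_preserving_maps_finite_to_finite
    {Ω : Type*} [MeasurableSpace Ω] {μ : Measure Ω} [IsProbabilityMeasure μ]
    {E : Type*} [AddCommGroup E] [Module (Ω →ₘ[μ] ℝ) E]
    (nrm : E → Ω →ₘ[μ] ℝ) (hnrm : IsRNNorm nrm)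
    (hcomplete : IsCompleteRN nrm) (hfull : HasFullSupport nrm)
    (T : CvxFn nrm → CvxFn nrm) (hT : IsFullyOrderPreserving nrm T)
    (hstable : IsStableOp nrm T)
    (f : CvxFn nrm) (hfin : ∀ x : E, ∀ᵐ ω ∂μ, f.1 x ω ≠ ⊤ ∧ f.1 x ω ≠ ⊥) :
    ∀ x : E, ∀ᵐ ω ∂μ, (T f).1 x ω ≠ ⊤ ∧ (T f).1 x ω ≠ ⊥ := by
  intro x₀
  have hbot := (T f).2.2.1 x₀
  have htop : ∀ᵐ ω ∂μ, (T f).1 x₀ ω ≠ ⊤ := by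
    by_contra hcon
    -- the scalar 1/2 in L⁰
    set c : Ω →ₘ[μ] ℝ := AEEqFun.const Ω (2⁻¹ : ℝ) with hcdef
    have hcoe : (⇑c : Ω → ℝ) =ᵐ[μ] fun _ => (2⁻¹ : ℝ) := AEEqFun.coeFn_const Ω (2⁻¹ : ℝ)
    have hcc : c + c = 1 := by
      apply AEEqFun.ext
      filter_upwards [AEEqFun.coeFn_add c c, hcoe, AEEqFun.coeFn_one (β := ℝ) (μ := μ)]
        with ω h1 h2 h3
      rw [h1, Pi.add_apply, h2, h3]; norm_num
    have h1c : (1 : Ω →ₘ[μ] ℝ) - c = c := by rw [← hcc]; abel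
    have hc0 : (0 : Ω →ₘ[μ] ℝ) ≤ c := by
      rw [← AEEqFun.coeFn_le]
      filter_upwards [hcoe, AEEqFun.coeFn_zero (β := ℝ) (μ := μ)] with ω h2 h0
      rw [h2, h0]; norm_num
    have hc1 : c ≤ (1 : Ω →ₘ[μ] ℝ) := by
      rw [← AEEqFun.coeFn_le]
      filter_upwards [hcoe, AEEqFun.coeFn_one (β := ℝ) (μ := μ)] with ω h2 h1
      rw [h2, h1]; norm_num
    have habs : |(-1 : Ω →ₘ[μ] ℝ)| = 1 := by
      apply AEEqFun.ext
      filter_upwards [AEEqFun.coeFn_abs (-1 : Ω →ₘ[μ] ℝ), AEEqFun.coeFn_neg (1 : Ω →ₘ[μ] ℝ),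
        AEEqFun.coeFn_one (β := ℝ) (μ := μ)] with ω h1 h2 h3
      rw [h1, h2, Pi.neg_apply, h3]; norm_num
    have hnegnrm : ∀ v : E, nrm (-v) = nrm v := by
      intro v
      have : (-v : E) = (-1 : Ω →ₘ[μ] ℝ) • v := (neg_one_smul _ v).symm
      rw [this, hnrm.2.1, habs, one_mul]
    -- the reflected function g₀ x = (T f) (x₀ + x₀ - x)
    set g₀ : E → Ω → EReal := fun x => (T f).1 (x₀ + x₀ - x) with hg₀def
    have hg₀ : IsCvxFn nrm g₀ := by
      obtain ⟨hmeas, hb, ⟨x₁, hx₁⟩, hcvx, hlsc⟩ := (T f).2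
      refine ⟨fun x => hmeas _, fun x => hb _, ⟨x₀ + x₀ - x₁, ?_⟩, ?_, ?_⟩
      · have hpt : x₀ + x₀ - (x₀ + x₀ - x₁) = x₁ := by abel
        show ∀ᵐ ω ∂μ, (T f).1 (x₀ + x₀ - (x₀ + x₀ - x₁)) ω < ⊤
        rw [hpt]; exact hx₁
      · intro ξ h0 h1 x y
        have hkey : x₀ + x₀ - (ξ • x + (1 - ξ) • y)
            = ξ • (x₀ + x₀ - x) + (1 - ξ) • (x₀ + x₀ - y) := by
          have hone : ξ + (1 - ξ) = (1 : Ω →ₘ[μ] ℝ) := by abel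
          have : ξ • (x₀ + x₀ - x) + (1 - ξ) • (x₀ + x₀ - y)
              = (ξ + (1 - ξ)) • (x₀ + x₀) - (ξ • x + (1 - ξ) • y) := by module
          rw [this, hone, one_smul]
        have := hcvx ξ h0 h1 (x₀ + x₀ - x) (x₀ + x₀ - y)
        show ∀ᵐ ω ∂μ, (T f).1 (x₀ + x₀ - (ξ • x + (1 - ξ) • y)) ω ≤ _
        rw [hkey]; exact this
      · intro x r xl rl hbd hx hr
        have hfun : (fun n => dP μ (nrm ((x₀ + x₀ - x n) - (x₀ + x₀ - xl))))
            = fun n => dP μ (nrm (x n - xl)) := by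
          funext n
          have h1 : (x₀ + x₀ - x n) - (x₀ + x₀ - xl) = -(x n - xl) := by abel
          rw [h1, hnegnrm]
        have := hlsc (fun n => x₀ + x₀ - x n) r (x₀ + x₀ - xl) rl hbd ?_ hr
        · exact this
        · rw [hfun]; exact hx
    obtain ⟨p, hp⟩ := hT.2 ⟨g₀, hg₀⟩
    -- M = max (f, p)
    set M : E → Ω → EReal := fun x ω => max (f.1 x ω) (p.1 x ω) with hMdef
    have hM : IsCvxFn nrm M := by
      refine ⟨fun x => (f.2.1 x).max (p.2.1 x), ?_, ?_, ?_, ?_⟩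
      · intro x
        filter_upwards [f.2.2.1 x] with ω h
        exact lt_max_iff.mpr (Or.inl h)
      · obtain ⟨x₁, hx₁⟩ := p.2.2.2.1
        refine ⟨x₁, ?_⟩
        filter_upwards [hx₁, hfin x₁] with ω h1 h2
        exact max_lt (lt_top_iff_ne_top.mpr h2.1) h1
      · intro ξ h0 h1 x y
        have haξ : ∀ᵐ ω ∂μ, (0 : ℝ) ≤ ξ ω := by
          have := AEEqFun.coeFn_le.mpr h0
          filter_upwards [this, AEEqFun.coeFn_zero (β := ℝ) (μ := μ)] with ω hω h0'
          simpa [h0'] using hω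
        have haη : ∀ᵐ ω ∂μ, (0 : ℝ) ≤ (1 - ξ : Ω →ₘ[μ] ℝ) ω := by
          have := AEEqFun.coeFn_le.mpr h1
          filter_upwards [this, AEEqFun.coeFn_sub (1 : Ω →ₘ[μ] ℝ) ξ,
            AEEqFun.coeFn_one (β := ℝ) (μ := μ)] with ω hω hsub hone
          rw [hsub, Pi.sub_apply, hone]
          have : (ξ : Ω → ℝ) ω ≤ (1 : Ω →ₘ[μ] ℝ) ω := hω
          rw [hone] at this
          linarith
        filter_upwards [f.2.2.2.2.1 ξ h0 h1 x y, p.2.2.2.2.1 ξ h0 h1 x y, haξ, haη]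
          with ω e1 e2 n1 n2
        have n1' : (0 : EReal) ≤ ((ξ ω : ℝ) : EReal) := by exact_mod_cast n1
        have n2' : (0 : EReal) ≤ (((1 - ξ : Ω →ₘ[μ] ℝ) ω : ℝ) : EReal) := by exact_mod_cast n2
        refine max_le ?_ ?_
        · refine e1.trans (add_le_add ?_ ?_)
          · exact mul_le_mul_of_nonneg_left (le_max_left _ _) n1'
          · exact mul_le_mul_of_nonneg_left (le_max_left _ _) n2'
        · refine e2.trans (add_le_add ?_ ?_)
          · exact mul_le_mul_of_nonneg_left (le_max_right _ _) n1'
          · exact mul_le_mul_of_nonneg_left (le_max_right _ _) n2'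
      · intro x r xl rl hbd hx hr
        have hbf : ∀ n, ∀ᵐ ω ∂μ, f.1 (x n) ω ≤ ((r n ω : ℝ) : EReal) := fun n => by
          filter_upwards [hbd n] with ω h
          exact (le_max_left _ _).trans h
        have hbp : ∀ n, ∀ᵐ ω ∂μ, p.1 (x n) ω ≤ ((r n ω : ℝ) : EReal) := fun n => by
          filter_upwards [hbd n] with ω h
          exact (le_max_right _ _).trans h
        filter_upwards [f.2.2.2.2.2 x r xl rl hbf hx hr, p.2.2.2.2.2 x r xl rl hbp hx hr]
          with ω h1 h2
        exact max_le h1 h2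
    -- T M dominates T f and g₀
    have hfM : CleFn μ f.1 M := fun x => Filter.Eventually.of_forall fun ω => le_max_left _ _
    have hpM : CleFn μ p.1 M := fun x => Filter.Eventually.of_forall fun ω => le_max_right _ _
    have hTle1 : CleFn μ (T f).1 (T ⟨M, hM⟩).1 := (hT.1 f ⟨M, hM⟩).mp hfM
    have hTle2 : CleFn μ (T p).1 (T ⟨M, hM⟩).1 := (hT.1 p ⟨M, hM⟩).mp hpM
    obtain ⟨xs, hxs⟩ := (T ⟨M, hM⟩).2.2.2.1
    -- convexity of T f at the midpoint x₀
    have hcvx := (T f).2.2.2.2.1 c hc0 hc1 xs (x₀ + x₀ - xs)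
    have hpt : c • xs + (1 - c) • (x₀ + x₀ - xs) = x₀ := by
      rw [h1c]
      have : c • xs + c • (x₀ + x₀ - xs) = (c + c) • x₀ := by module
      rw [this, hcc, one_smul]
    rw [hpt, h1c] at hcvx
    apply hcon
    have hp' : ∀ᵐ ω ∂μ, (T p).1 xs ω = (T f).1 (x₀ + x₀ - xs) ω := hp xs
    filter_upwards [hcvx, hTle1 xs, hTle2 xs, hp', hxs, hcoe] with ω e1 e2 e3 e4 e5 e6
    intro htopω
    have hfx : (T f).1 xs ω < ⊤ := lt_of_le_of_lt e2 e5
    have hgx : (T f).1 (x₀ + x₀ - xs) ω < ⊤ := lt_of_le_of_lt (e4 ▸ e3) e5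
    rw [htopω, e6] at e1
    have hmul : ∀ a : EReal, a ≠ ⊤ → ((2⁻¹ : ℝ) : EReal) * a < ⊤ := by
      intro a ha
      induction a using EReal.rec with
      | bot => rw [EReal.coe_mul_bot_of_pos (by norm_num)]; exact bot_lt_top
      | coe x => rw [← EReal.coe_mul]; exact EReal.coe_lt_top _
      | top => exact absurd rfl ha
    have hlt : ((2⁻¹ : ℝ) : EReal) * (T f).1 xs ω
        + ((2⁻¹ : ℝ) : EReal) * (T f).1 (x₀ + x₀ - xs) ω < ⊤ :=
      EReal.add_lt_top (hmul _ hfx.ne).ne (hmul _ hgx.ne).ne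
    exact absurd (top_le_iff.mp e1) hlt.ne
  filter_upwards [htop, hbot] with ω h1 h2
  exact ⟨h1, h2.ne'⟩

end RandomNormed
end

section
/- Let E be a complete random normed module with full support, f ∈ 𝒞(E), and h_{u,α}(x) = u(x) + α an L⁰-affine function with u ∈ E*, α ∈ L⁰(F). If f ≤ h_{u,α} pointwise, then f = h_{u,β} for some β ∈ L⁰(F) with β ≤ α. -/
open MeasureTheory Filter Topology ENNReal
open scoped Classical

namespace RandomNormed

variable {Ω : Type*} [MeasurableSpace Ω] {μ : Measure Ω}

/-! Since `⊥ < f ≤ h_{u,α}`, `f` takes finite values and may be replaced by a real-valued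
`L⁰`-convex `F`. Writing `x` as the convex combination `t⁻¹ (t x) + (1 - t⁻¹) 0` for real
`t ≥ 1` gives `F x ≤ u x + F 0 + t⁻¹ (α - F 0)`, hence `F x ≤ u x + F 0` as `t → ∞`.
The translate `F (· + x)` lies below `h_{u, u x + α}`, and the same inequality for it at `-x`
reads `F 0 ≤ -u x + F x`. So `F = h_{u,β}` with `β = F 0 ≤ α`. -/

section Affine

variable {E : Type*} [AddCommGroup E] [Module (Ω →ₘ[μ] ℝ) E]

noncomputable def constRingHom : ℝ →+* (Ω →ₘ[μ] ℝ) where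
  toFun := AEEqFun.const Ω
  map_one' := rfl
  map_mul' a b := by simp only [AEEqFun.const, AEEqFun.mk_mul_mk]; rfl
  map_zero' := rfl
  map_add' a b := by simp only [AEEqFun.const, AEEqFun.mk_add_mk]; rfl

theorem coeFn_constRingHom (t : ℝ) : ⇑(constRingHom t : Ω →ₘ[μ] ℝ) =ᵐ[μ] fun _ => t :=
  AEEqFun.coeFn_const Ω t

theorem constRingHom_mono : Monotone (constRingHom : ℝ →+* (Ω →ₘ[μ] ℝ)) :=
  fun _ _ h => (AEEqFun.mk_le_mk _ _).2 (Eventually.of_forall fun _ => h)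

theorem le_of_forall_le_add_inv_succ_mul {a b c : ℝ}
    (h : ∀ n : ℕ, a ≤ b + ((n : ℝ) + 1)⁻¹ * c) : a ≤ b := by
  have hlim : Tendsto (fun n : ℕ => b + ((n : ℝ) + 1)⁻¹ * c) atTop (𝓝 b) := by
    simpa [one_div] using
      tendsto_const_nhds.add (tendsto_one_div_add_atTop_nhds_zero_nat.mul_const c)
  exact ge_of_tendsto' hlim h

theorem ae_eq_coe_toReal {g : Ω → EReal} {r : Ω → ℝ} (hbot : ∀ᵐ ω ∂μ, ⊥ < g ω)
    (hle : ∀ᵐ ω ∂μ, g ω ≤ r ω) : ∀ᵐ ω ∂μ, g ω = ((g ω).toReal : EReal) := by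
  filter_upwards [hbot, hle] with ω hb hr
  exact (EReal.coe_toReal (ne_top_of_le_ne_top (EReal.coe_ne_top _) hr) hb.ne').symm

variable (μ) in
def IsL0Convex (F : E → Ω → ℝ) : Prop :=
  ∀ ξ : Ω →ₘ[μ] ℝ, 0 ≤ ξ → ξ ≤ 1 → ∀ x y : E, ∀ᵐ ω ∂μ,
    F (ξ • x + (1 - ξ) • y) ω ≤ ξ ω * F x ω + (1 - ξ) ω * F y ω

theorem IsCvxFn.isL0Convex_of_ae_eq {nrm : E → Ω →ₘ[μ] ℝ} {f : E → Ω → EReal}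
    {F : E → Ω → ℝ} (hf : IsCvxFn nrm f) (hfF : ∀ x, ∀ᵐ ω ∂μ, f x ω = F x ω) :
    IsL0Convex μ F := by
  intro ξ h0 h1 x y
  filter_upwards [hf.2.2.2.1 ξ h0 h1 x y, hfF x, hfF y, hfF (ξ • x + (1 - ξ) • y)]
    with ω hconv hx hy hxy
  rw [hx, hy, hxy] at hconv
  exact_mod_cast hconv

namespace IsL0Convex

variable {F : E → Ω → ℝ}

theorem comp_add_right (hF : IsL0Convex μ F) (z : E) : IsL0Convex μ (fun x => F (x + z)) := by
  intro ξ h0 h1 x y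
  have hcomb : ξ • (x + z) + (1 - ξ) • (y + z) = ξ • x + (1 - ξ) • y + z := by module
  simpa only [hcomb] using hF ξ h0 h1 (x + z) (y + z)

variable (u : E →ₗ[Ω →ₘ[μ] ℝ] (Ω →ₘ[μ] ℝ)) (α : Ω →ₘ[μ] ℝ)

theorem ae_le_map_add_apply_zero_add_inv_mul (hF : IsL0Convex μ F)
    (hle : ∀ x, ∀ᵐ ω ∂μ, F x ω ≤ (u x + α) ω) (x : E) {t : ℝ} (ht : 1 ≤ t) :
    ∀ᵐ ω ∂μ, F x ω ≤ u x ω + F 0 ω + t⁻¹ * (α ω - F 0 ω) := by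
  set T : Ω →ₘ[μ] ℝ := constRingHom t with hT
  set ξ : Ω →ₘ[μ] ℝ := constRingHom t⁻¹ with hξ
  have hξ0 : 0 ≤ ξ := map_zero (constRingHom : ℝ →+* (Ω →ₘ[μ] ℝ)) ▸
    constRingHom_mono (by positivity)
  have hξ1 : ξ ≤ 1 := map_one (constRingHom : ℝ →+* (Ω →ₘ[μ] ℝ)) ▸
    constRingHom_mono (inv_le_one_of_one_le₀ ht)
  have hx : ξ • T • x + (1 - ξ) • 0 = x := by
    rw [smul_zero, add_zero, smul_smul, hξ, hT, ← map_mul, inv_mul_cancel₀ (by positivity),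
      map_one, one_smul]
  have hconv := hF ξ hξ0 hξ1 (T • x) 0
  rw [hx] at hconv
  have hbound := hle (T • x)
  rw [map_smul, smul_eq_mul] at hbound
  filter_upwards [hconv, hbound, coeFn_constRingHom (μ := μ) t, coeFn_constRingHom (μ := μ) t⁻¹,
    AEEqFun.coeFn_sub 1 ξ, AEEqFun.coeFn_one (α := Ω) (β := ℝ) (μ := μ),
    AEEqFun.coeFn_add (T * u x) α, AEEqFun.coeFn_mul T (u x)]
    with ω hconv hbound hTω hξω hsub hone hadd hmul
  rw [hsub, Pi.sub_apply, hone, hξω, Pi.one_apply] at hconv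
  rw [hadd, Pi.add_apply, hmul, Pi.mul_apply, hTω] at hbound
  calc F x ω ≤ t⁻¹ * F (T • x) ω + (1 - t⁻¹) * F 0 ω := hconv
    _ ≤ t⁻¹ * (t * u x ω + α ω) + (1 - t⁻¹) * F 0 ω := by gcongr
    _ = u x ω + F 0 ω + t⁻¹ * (α ω - F 0 ω) := by field_simp; ring

theorem ae_le_map_add_apply_zero (hF : IsL0Convex μ F)
    (hle : ∀ x, ∀ᵐ ω ∂μ, F x ω ≤ (u x + α) ω) (x : E) :
    ∀ᵐ ω ∂μ, F x ω ≤ u x ω + F 0 ω := by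
  have approx : ∀ n : ℕ, ∀ᵐ ω ∂μ, F x ω ≤ u x ω + F 0 ω + ((n : ℝ) + 1)⁻¹ * (α ω - F 0 ω) :=
    fun n => hF.ae_le_map_add_apply_zero_add_inv_mul u α hle x (by simp)
  filter_upwards [ae_all_iff.2 approx] with ω hω using le_of_forall_le_add_inv_succ_mul hω

theorem ae_eq_map_add_apply_zero (hF : IsL0Convex μ F)
    (hle : ∀ x, ∀ᵐ ω ∂μ, F x ω ≤ (u x + α) ω) (x : E) :
    ∀ᵐ ω ∂μ, F x ω = u x ω + F 0 ω := by
  have hle_shift : ∀ y, ∀ᵐ ω ∂μ, F (y + x) ω ≤ (u y + (u x + α)) ω := fun y => by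
    simpa only [map_add, add_assoc] using hle (y + x)
  have hreverse := (hF.comp_add_right x).ae_le_map_add_apply_zero u (u x + α) hle_shift (-x)
  simp only [neg_add_cancel, zero_add, map_neg] at hreverse
  filter_upwards [hF.ae_le_map_add_apply_zero u α hle x, hreverse, AEEqFun.coeFn_neg (u x)]
    with ω hle_x hge_x hneg
  rw [hneg, Pi.neg_apply] at hge_x
  linarith

end IsL0Convex

end Affine

theorem below_affine_is_affine_general
    {Ω : Type*} [MeasurableSpace Ω] {μ : Measure Ω}
    {E : Type*} [AddCommGroup E] [Module (Ω →ₘ[μ] ℝ) E]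
    (nrm : E → Ω →ₘ[μ] ℝ)
    (f : E → Ω → EReal) (hf : IsCvxFn nrm f)
    (u : E →ₗ[Ω →ₘ[μ] ℝ] (Ω →ₘ[μ] ℝ)) (α : Ω →ₘ[μ] ℝ)
    (hle : ∀ x : E, ∀ᵐ ω ∂μ, f x ω ≤ (((u x + α) ω : ℝ) : EReal)) :
    ∃ β : Ω →ₘ[μ] ℝ, β ≤ α ∧
      ∀ x : E, ∀ᵐ ω ∂μ, f x ω = (((u x + β) ω : ℝ) : EReal) := by
  set F : E → Ω → ℝ := fun x ω => (f x ω).toReal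
  have hfF : ∀ x, ∀ᵐ ω ∂μ, f x ω = F x ω := fun x => ae_eq_coe_toReal (hf.2.1 x) (hle x)
  have hF : IsL0Convex μ F := hf.isL0Convex_of_ae_eq hfF
  have hFle : ∀ x, ∀ᵐ ω ∂μ, F x ω ≤ (u x + α) ω := fun x => by
    filter_upwards [hfF x, hle x] with ω hfx hlex
    rwa [hfx, EReal.coe_le_coe_iff] at hlex
  have hF0 : AEStronglyMeasurable (F 0) μ :=
    (measurable_ereal_toReal.comp_aemeasurable (hf.1 0)).aestronglyMeasurable
  refine ⟨AEEqFun.mk (F 0) hF0, ?_, fun x => ?_⟩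
  · rw [← AEEqFun.coeFn_le]
    filter_upwards [AEEqFun.coeFn_mk (F 0) hF0, hFle 0] with ω hβ hα
    rw [map_zero, zero_add] at hα
    rwa [hβ]
  · filter_upwards [hfF x, hF.ae_eq_map_add_apply_zero u α hFle x,
      AEEqFun.coeFn_add (u x) (AEEqFun.mk (F 0) hF0), AEEqFun.coeFn_mk (F 0) hF0]
      with ω hfx hFx hadd hβ
    rw [hfx, hFx, hadd, Pi.add_apply, hβ]

/-- If `f ∈ 𝒞(E)` lies below the `L⁰`-affine function `h_{u,α} = u(·) + α`, then `f` is
itself `L⁰`-affine: `f = h_{u,β}` for some `β ≤ α`. -/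
theorem below_affine_is_affine
    {Ω : Type*} [MeasurableSpace Ω] {μ : Measure Ω} [IsProbabilityMeasure μ]
    {E : Type*} [AddCommGroup E] [Module (Ω →ₘ[μ] ℝ) E]
    (nrm : E → Ω →ₘ[μ] ℝ) (hnrm : IsRNNorm nrm)
    (hcomplete : IsCompleteRN nrm) (hfull : HasFullSupport nrm)
    (f : E → Ω → EReal) (hf : IsCvxFn nrm f)
    (u : E →ₗ[Ω →ₘ[μ] ℝ] (Ω →ₘ[μ] ℝ)) (hu : IsBoundedLF nrm u) (α : Ω →ₘ[μ] ℝ)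
    (hle : ∀ x : E, ∀ᵐ ω ∂μ, f x ω ≤ (((u x + α) ω : ℝ) : EReal)) :
    ∃ β : Ω →ₘ[μ] ℝ, β ≤ α ∧
      ∀ x : E, ∀ᵐ ω ∂μ, f x ω = (((u x + β) ω : ℝ) : EReal) :=
  below_affine_is_affine_general nrm f hf u α hle

end RandomNormed
end
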